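/- arXiv:2411.03065 — 7 statements merged into one kernel-verified Lean document; each statement's English description precedes it below -/
import Mathlib

section
/- Let n ≥ 1 and let μ_n, μ_{n+1} be probability measures on {1,...,n} and {1,...,n+1} respectively. If for all m = 1,...,n we have μ_{n+1}(m) ≤ μ_n(m) and μ_n(m) ≥ μ_{n+1}(m+1), then there exists a coupling (X_n, X_{n+1}) of μ_n and μ_{n+1} such that almost surely X_{n+1} ∈ {X_n, X_n + 1}. -/
theorem stmt1 (n : ℕ) (hn : 1 ≤ n) (μ ν : ℕ → ℝ)
    (hμ0 : ∀ m, 0 ≤ μ m) (hν0 : ∀ m, 0 ≤ ν m)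
    (hμsupp : ∀ m, μ m ≠ 0 → m ∈ Finset.Icc 1 n)
    (hνsupp : ∀ m, ν m ≠ 0 → m ∈ Finset.Icc 1 (n + 1))
    (hμ1 : ∑ m ∈ Finset.Icc 1 n, μ m = 1)
    (hν1 : ∑ m ∈ Finset.Icc 1 (n + 1), ν m = 1)
    (h1 : ∀ m ∈ Finset.Icc 1 n, ν m ≤ μ m)
    (h2 : ∀ m ∈ Finset.Icc 1 n, ν (m + 1) ≤ μ m) :
    ∃ p : ℕ → ℕ → ℝ, (∀ a b, 0 ≤ p a b) ∧
      (∀ a, ∑' b, p a b = μ a) ∧ (∀ b, ∑' a, p a b = ν b) ∧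
      (∀ a b, p a b ≠ 0 → b = a ∨ b = a + 1) := by
  set t : ℕ → ℝ := fun a => ∑ k ∈ Finset.Icc 1 a, (μ k - ν k) with ht
  have hμout : ∀ m, m ∉ Finset.Icc 1 n → μ m = 0 := by
    intro m hm; by_contra h; exact hm (hμsupp m h)
  have hνout : ∀ m, m ∉ Finset.Icc 1 (n + 1) → ν m = 0 := by
    intro m hm; by_contra h; exact hm (hνsupp m h)
  have hμtail : ∀ a, n ≤ a → ∑ k ∈ Finset.Icc 1 a, μ k = 1 := by
    intro a ha
    rw [← hμ1]
    exact (Finset.sum_subset (Finset.Icc_subset_Icc_right ha)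
      (fun x _ hx' => hμout x hx')).symm
  have hνtail : ∀ a, n + 1 ≤ a → ∑ k ∈ Finset.Icc 1 a, ν k = 1 := by
    intro a ha
    rw [← hν1]
    exact (Finset.sum_subset (Finset.Icc_subset_Icc_right ha)
      (fun x _ hx' => hνout x hx')).symm
  have ht0 : t 0 = 0 := by simp [ht]
  have hzero : ∀ a, n + 1 ≤ a → t a = 0 := by
    intro a ha
    simp only [ht, Finset.sum_sub_distrib]
    rw [hμtail a (by omega), hνtail a ha]
    ring
  have hrec : ∀ c : ℕ, t (c + 1) = t c + (μ (c + 1) - ν (c + 1)) := by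
    intro c
    simp only [ht]
    rw [Finset.sum_Icc_succ_top (by omega)]
  have htnn : ∀ a, 0 ≤ t a := by
    intro a
    rcases le_or_gt a n with h | h
    · apply Finset.sum_nonneg
      intro k hk
      simp only [Finset.mem_Icc] at hk
      have := h1 k (by simp only [Finset.mem_Icc]; omega)
      linarith
    · rw [hzero a (by omega)]
  -- key bound : t c ≤ ν (c+1) for c + 1 ≤ n
  have hkey : ∀ c : ℕ, c + 1 ≤ n → t c ≤ ν (c + 1) := by
    intro c hc
    have hsplitμ : ∑ k ∈ Finset.Icc 1 c, μ k + ∑ k ∈ Finset.Icc (c + 1) n, μ k = 1 := by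
      rw [← hμ1, ← Finset.sum_union]
      · congr 1
        ext x
        simp only [Finset.mem_union, Finset.mem_Icc]
        omega
      · rw [Finset.disjoint_left]
        intro x hx hx'
        simp only [Finset.mem_Icc] at hx hx'
        omega
    have hsplitν : ∑ k ∈ Finset.Icc 1 c, ν k + ∑ k ∈ Finset.Icc (c + 1) (n + 1), ν k = 1 := by
      rw [← hν1, ← Finset.sum_union]
      · congr 1
        ext x
        simp only [Finset.mem_union, Finset.mem_Icc]
        omega
      · rw [Finset.disjoint_left]
        intro x hx hx'
        simp only [Finset.mem_Icc] at hx hx'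
        omega
    have hpeel : ∑ k ∈ Finset.Icc (c + 1) (n + 1), ν k
        = ν (c + 1) + ∑ k ∈ Finset.Icc (c + 1) n, ν (k + 1) := by
      rw [Finset.Icc_eq_cons_Ioc (by omega), Finset.sum_cons]
      congr 1
      rw [← Finset.Icc_add_one_left_eq_Ioc]
      rw [show Finset.Icc (c + 1 + 1) (n + 1)
          = Finset.map (addRightEmbedding 1) (Finset.Icc (c + 1) n) from by
        rw [Finset.map_add_right_Icc]]
      rw [Finset.sum_map]
      rfl
    have hle : ∑ k ∈ Finset.Icc (c + 1) n, ν (k + 1) ≤ ∑ k ∈ Finset.Icc (c + 1) n, μ k := by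
      apply Finset.sum_le_sum
      intro k hk
      simp only [Finset.mem_Icc] at hk
      exact h2 k (by simp only [Finset.mem_Icc]; omega)
    have : t c = ∑ k ∈ Finset.Icc 1 c, μ k - ∑ k ∈ Finset.Icc 1 c, ν k := by
      simp only [ht, Finset.sum_sub_distrib]
    linarith
  have htb : ∀ a, t a ≤ μ a := by
    intro a
    match a with
    | 0 => rw [ht0]; exact hμ0 0
    | c + 1 =>
      rcases le_or_gt (c + 1) n with h | h
      · rw [hrec c]
        have := hkey c h
        linarith
      · rw [hzero (c + 1) (by omega), hμout (c + 1) (by simp only [Finset.mem_Icc]; omega)]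
  refine ⟨fun a b => if b = a then μ a - t a else if b = a + 1 then t a else 0, ?_, ?_, ?_, ?_⟩
  · intro a b
    dsimp only
    split_ifs with h h'
    · have := htb a; linarith
    · exact htnn a
    · exact le_refl 0
  · intro a
    dsimp only
    rw [tsum_eq_sum (s := {a, a + 1}) ?_]
    · rw [Finset.sum_pair (by omega)]
      rw [if_pos rfl, if_neg (by omega), if_pos rfl]
      ring
    · intro b hb
      simp only [Finset.mem_insert, Finset.mem_singleton] at hb
      push_neg at hb
      rw [if_neg hb.1, if_neg hb.2]
  · intro b
    dsimp only
    match b with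
    | 0 =>
      have : ∀ a : ℕ, (if (0:ℕ) = a then μ a - t a else if (0:ℕ) = a + 1 then t a else 0) = 0 := by
        intro a
        rcases Nat.eq_zero_or_pos a with rfl | ha
        · rw [if_pos rfl, ht0, hμout 0 (by simp)]; ring
        · rw [if_neg (by omega), if_neg (by omega)]
      simp only [this, tsum_zero]
      exact (hνout 0 (by simp)).symm
    | c + 1 =>
      rw [tsum_eq_sum (s := {c, c + 1}) ?_]
      · rw [Finset.sum_pair (by omega)]
        rw [if_neg (by omega), if_pos rfl, if_pos rfl]
        have := hrec c
        linarith
      · intro a ha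
        simp only [Finset.mem_insert, Finset.mem_singleton] at ha
        push_neg at ha
        rw [if_neg (by omega), if_neg (by omega)]
  · intro a b h
    dsimp only at h
    by_contra hc
    push_neg at hc
    rw [if_neg hc.1, if_neg hc.2] at h
    exact h rfl
end

section
/- Let x = (x_i)_{i≥0} be a non-negative log-concave sequence and let (F_{n,k})_{n,k≥0} be an array of non-negative reals such that F_{n,k} = 0 whenever k > n, and satisfying F_{n,k} = Σ_{i≥0} x_i · F_{n-1, k+i-1} for all n ≥ 1 and k ≥ 0 (with the convention F_{n,-1} = 0). Then the array (F_{n,k}) is totally positive of order two: for all 0 ≤ n ≤ n' and 0 ≤ k ≤ k', we have F_{n,k}·F_{n',k'} ≥ F_{n,k'}·F_{n',k}. -/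
open Finset

/-- One-step extended log-concavity. -/
lemma lc_step (x : ℕ → ℝ) (hx0 : ∀ i, 0 ≤ x i)
    (hlc : ∀ i : ℕ, 1 ≤ i → x (i - 1) * x (i + 1) ≤ (x i) ^ 2)
    (hniz : ∀ i j k : ℕ, i ≤ k → k ≤ j → x i ≠ 0 → x j ≠ 0 → x k ≠ 0) :
    ∀ c e : ℕ, 1 ≤ c → c ≤ e → x (c - 1) * x (e + 1) ≤ x c * x e := by
  intro c e hc hce
  induction e, hce using Nat.le_induction with
  | base =>
    have := hlc c hc
    nlinarith [hx0 c]
  | succ e hce ih =>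
    by_cases h : x (e + 1) = 0
    · have hz : x (c - 1) * x (e + 1 + 1) = 0 := by
        rcases eq_or_ne (x (c - 1)) 0 with h1 | h1
        · rw [h1, zero_mul]
        · rcases eq_or_ne (x (e + 2)) 0 with h2 | h2
          · show x (c-1) * x (e+2) = 0
            rw [h2, mul_zero]
          · exact absurd (hniz (c - 1) (e + 2) (e + 1) (by omega) (by omega) h1 h2) (by simp [h])
      rw [hz, h, mul_zero]
    · have hpos : 0 < x (e + 1) := lt_of_le_of_ne (hx0 _) (Ne.symm h)
      have h2 := hlc (e + 1) (by omega)
      simp only [Nat.add_sub_cancel] at h2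
      have h3 := mul_le_mul_of_nonneg_right ih (hx0 (e + 2))
      have h4 := mul_le_mul_of_nonneg_left h2 (hx0 c)
      -- x(c-1)*x(e+1)*x(e+2) ≤ x c * x e * x(e+2) ≤ x c * x(e+1)^2
      nlinarith [hx0 c, hx0 (c - 1), hx0 (e + 2)]

lemma lc_gen (x : ℕ → ℝ) (hx0 : ∀ i, 0 ≤ x i)
    (hlc : ∀ i : ℕ, 1 ≤ i → x (i - 1) * x (i + 1) ≤ (x i) ^ 2)
    (hniz : ∀ i j k : ℕ, i ≤ k → k ≤ j → x i ≠ 0 → x j ≠ 0 → x k ≠ 0) :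
    ∀ t p q : ℕ, p ≤ q → t ≤ p → x (p - t) * x (q + t) ≤ x p * x q := by
  intro t
  induction t with
  | zero => intro p q hpq _; simp
  | succ t ih =>
    intro p q hpq htp
    have h1 : x (p - (t+1)) * x (q + (t+1)) ≤ x (p - t) * x (q + t) := by
      have := lc_step x hx0 hlc hniz (p - t) (q + t) (by omega) (by omega)
      have e1 : p - t - 1 = p - (t + 1) := by omega
      have e2 : q + t + 1 = q + (t + 1) := by omega
      rwa [e1, e2] at this
    exact h1.trans (ih p q hpq (by omega))

lemma lc_pair (x : ℕ → ℝ) (hx0 : ∀ i, 0 ≤ x i)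
    (hlc : ∀ i : ℕ, 1 ≤ i → x (i - 1) * x (i + 1) ≤ (x i) ^ 2)
    (hniz : ∀ i j k : ℕ, i ≤ k → k ≤ j → x i ≠ 0 → x j ≠ 0 → x k ≠ 0) :
    ∀ a b D : ℕ, D ≤ a → a ≤ b + D → x (a - D) * x (b + D) ≤ x a * x b := by
  intro a b D hDa hab
  rcases le_total a b with h | h
  · exact lc_gen x hx0 hlc hniz D a b h hDa
  · have := lc_gen x hx0 hlc hniz (b + D - a) b a h (by omega)
    have e1 : b - (b + D - a) = a - D := by omega
    have e2 : a + (b + D - a) = b + D := by omega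
    rw [e1, e2] at this
    linarith [this, mul_comm (x a) (x b)]

/-- Core positivity lemma via the pairing/involution argument. -/
lemma core_pos (x : ℕ → ℝ) (hx0 : ∀ i, 0 ≤ x i)
    (hlcpair : ∀ a b D : ℕ, D ≤ a → a ≤ b + D → x (a - D) * x (b + D) ≤ x a * x b)
    (A : ℤ → ℤ → ℝ) (hskew : ∀ a b, A a b = - A b a) (hpos : ∀ a b, a ≤ b → 0 ≤ A a b)
    (k k' : ℤ) (hkk' : k ≤ k') (N : ℕ) :
    0 ≤ ∑ p ∈ Finset.range N ×ˢ Finset.range N,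
        x p.1 * x p.2 * A (k + p.1 - 1) (k' + p.2 - 1) := by
  set D := (k' - k).toNat with hDdef
  have hDk : (D : ℤ) = k' - k := Int.toNat_of_nonneg (by linarith)
  set s := Finset.range N ×ˢ Finset.range N with hs
  set t : ℕ × ℕ → ℝ := fun p => x p.1 * x p.2 * A (k + p.1 - 1) (k' + p.2 - 1) with ht
  have hsplit := (Finset.sum_filter_add_sum_filter_not s (fun p => p.1 ≤ p.2 + D) t).symm
  set P := s.filter (fun p => p.1 ≤ p.2 + D) with hP
  set Neg := s.filter (fun p => ¬ p.1 ≤ p.2 + D) with hNeg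
  set J := s.filter (fun p => D ≤ p.1 ∧ p.1 < p.2 + D ∧ p.2 + D < N) with hJ
  -- the bijection σ : Neg ≃ J
  have hbij : ∑ p ∈ Neg, t p = ∑ p ∈ J, t (p.2 + D, p.1 - D) := by
    apply Finset.sum_nbij' (i := fun p : ℕ × ℕ => (p.2 + D, p.1 - D))
      (j := fun p : ℕ × ℕ => (p.2 + D, p.1 - D))
    · intro a ha
      simp only [hNeg, hs, Finset.mem_filter, Finset.mem_product, Finset.mem_range] at ha
      simp only [hJ, hs, Finset.mem_filter, Finset.mem_product, Finset.mem_range]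
      omega
    · intro a ha
      simp only [hJ, hs, Finset.mem_filter, Finset.mem_product, Finset.mem_range] at ha
      simp only [hNeg, hs, Finset.mem_filter, Finset.mem_product, Finset.mem_range]
      omega
    · intro a ha
      simp only [hNeg, hs, Finset.mem_filter, Finset.mem_product, Finset.mem_range] at ha
      have : a.1 - D + D = a.1 := by omega
      simp [this]
    · intro a ha
      simp only [hJ, hs, Finset.mem_filter, Finset.mem_product, Finset.mem_range] at ha
      have : a.1 - D + D = a.1 := by omega
      simp [this]
    · intro a ha
      simp only [hNeg, hs, Finset.mem_filter, Finset.mem_product, Finset.mem_range] at ha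
      have h1 : a.2 + D - D = a.2 := by omega
      have h2 : a.1 - D + D = a.1 := by omega
      simp [ht, h1, h2]
  have hJP : J ⊆ P := by
    intro p hp
    simp only [hJ, hs, Finset.mem_filter, Finset.mem_product, Finset.mem_range] at hp
    simp only [hP, hs, Finset.mem_filter, Finset.mem_product, Finset.mem_range]
    omega
  have hsdiff : ∑ p ∈ P, t p = ∑ p ∈ P \ J, t p + ∑ p ∈ J, t p :=
    (Finset.sum_sdiff hJP).symm
  have key : ∑ p ∈ s, t p
      = ∑ p ∈ P \ J, t p + ∑ p ∈ J, (t p + t (p.2 + D, p.1 - D)) := by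
    rw [hsplit, hbij, hsdiff, Finset.sum_add_distrib]
    ring
  rw [key]
  have hposP : ∀ p ∈ P, 0 ≤ t p := by
    intro p hp
    simp only [hP, hs, Finset.mem_filter, Finset.mem_product, Finset.mem_range] at hp
    apply mul_nonneg (mul_nonneg (hx0 _) (hx0 _))
    apply hpos
    have : (p.1 : ℤ) ≤ (p.2 : ℤ) + D := by exact_mod_cast Nat.cast_le.mpr hp.2
    omega
  apply add_nonneg
  · exact Finset.sum_nonneg fun p hp => hposP p (Finset.mem_sdiff.mp hp).1
  · apply Finset.sum_nonneg
    intro p hp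
    simp only [hJ, hs, Finset.mem_filter, Finset.mem_product, Finset.mem_range] at hp
    obtain ⟨⟨h1N, h2N⟩, hDa, hab, hbDN⟩ := hp
    set a := p.1
    set b := p.2
    have e1 : (k + ((b + D : ℕ) : ℤ) - 1) = k' + b - 1 := by push_cast; omega
    have e2 : (k' + ((a - D : ℕ) : ℤ) - 1) = k + a - 1 := by
      have : ((a - D : ℕ) : ℤ) = (a : ℤ) - D := by omega
      rw [this]; omega
    have hAswap : A (k + ((b + D : ℕ) : ℤ) - 1) (k' + ((a - D : ℕ) : ℤ) - 1)
        = - A (k + a - 1) (k' + b - 1) := by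
      rw [e1, e2, hskew]
    have hteq : t p + t (b + D, a - D)
        = (x a * x b - x (b + D) * x (a - D)) * A (k + a - 1) (k' + b - 1) := by
      simp only [ht]
      rw [hAswap]
      ring
    rw [hteq]
    apply mul_nonneg
    · have := hlcpair a b D hDa (by omega)
      linarith
    · apply hpos
      have : (a : ℤ) < (b : ℤ) + D := by exact_mod_cast hab
      omega

theorem stmt3 (x : ℕ → ℝ) (F : ℕ → ℤ → ℝ)
    (hx0 : ∀ i, 0 ≤ x i)
    (hlc : ∀ i : ℕ, 1 ≤ i → x (i - 1) * x (i + 1) ≤ (x i) ^ 2)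
    (hniz : ∀ i j k : ℕ, i ≤ k → k ≤ j → x i ≠ 0 → x j ≠ 0 → x k ≠ 0)
    (hF0 : ∀ (n : ℕ) (k : ℤ), 0 ≤ F n k)
    (hFneg : ∀ (n : ℕ) (k : ℤ), k < 0 → F n k = 0)
    (hFbig : ∀ (n : ℕ) (k : ℤ), (n : ℤ) < k → F n k = 0)
    (hsum : ∀ (n : ℕ) (k : ℤ), Summable (fun i : ℕ => x i * F n (k + i - 1)))
    (hrec : ∀ n : ℕ, 1 ≤ n → ∀ k : ℤ, 0 ≤ k →
      F n k = ∑' i : ℕ, x i * F (n - 1) (k + i - 1)) :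
    ∀ n n' : ℕ, n ≤ n' → ∀ k k' : ℤ, 0 ≤ k → k ≤ k' →
      F n k' * F n' k ≤ F n k * F n' k' := by
  -- finite form of the recurrence
  have finrec : ∀ (n : ℕ) (k : ℤ), 0 ≤ k → ∀ N : ℕ, n + 2 ≤ N →
      F (n + 1) k = ∑ i ∈ Finset.range N, x i * F n (k + i - 1) := by
    intro n k hk N hN
    rw [hrec (n + 1) (by omega) k hk]
    have : (n + 1 : ℕ) - 1 = n := by omega
    rw [this]
    apply tsum_eq_sum
    intro i hi
    rw [Finset.mem_range, not_lt] at hi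
    have : (n : ℤ) < k + i - 1 := by
      have : (N : ℤ) ≤ (i : ℤ) := by exact_mod_cast hi
      have : (n : ℤ) + 2 ≤ (N : ℤ) := by exact_mod_cast hN
      omega
    rw [hFbig n _ this, mul_zero]
  have main : ∀ n m : ℕ, ∀ k k' : ℤ, 0 ≤ k → k ≤ k' →
      F n k' * F (n + m) k ≤ F n k * F (n + m) k' := by
    intro n
    induction n with
    | zero =>
      intro m k k' hk hkk'
      rcases eq_or_lt_of_le (le_trans hk hkk') with h0 | h0
      · have hk0 : k = 0 := le_antisymm (h0 ▸ hkk') hk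
        rw [← h0, hk0]
      · rw [hFbig 0 k' (by exact_mod_cast h0), zero_mul]
        exact mul_nonneg (hF0 _ _) (hF0 _ _)
    | succ n ih =>
      intro m k k' hk hkk'
      set N := n + m + 2 with hNdef
      have hA : ∀ a b : ℤ, a ≤ b → 0 ≤ F n a * F (n + m) b - F n b * F (n + m) a := by
        intro a b hab
        rcases lt_or_ge a 0 with ha | ha
        · rw [hFneg n a ha, hFneg (n + m) a ha, zero_mul, mul_zero, sub_zero]
        · have := ih m a b ha hab
          linarith
      have key := core_pos x hx0 (lc_pair x hx0 hlc hniz)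
        (fun a b => F n a * F (n + m) b - F n b * F (n + m) a)
        (fun a b => by ring) hA k k' hkk' N
      have e1 : F (n + 1) k = ∑ i ∈ Finset.range N, x i * F n (k + i - 1) :=
        finrec n k hk N (by omega)
      have e2 : F (n + 1) k' = ∑ i ∈ Finset.range N, x i * F n (k' + i - 1) :=
        finrec n k' (le_trans hk hkk') N (by omega)
      have hnm : n + 1 + m = (n + m) + 1 := by omega
      have e3 : F (n + 1 + m) k = ∑ j ∈ Finset.range N, x j * F (n + m) (k + j - 1) := by
        rw [hnm]; exact finrec (n + m) k hk N (by omega)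
      have e4 : F (n + 1 + m) k' = ∑ j ∈ Finset.range N, x j * F (n + m) (k' + j - 1) := by
        rw [hnm]; exact finrec (n + m) k' (le_trans hk hkk') N (by omega)
      have hid : F (n + 1) k * F (n + 1 + m) k' - F (n + 1) k' * F (n + 1 + m) k
          = ∑ p ∈ Finset.range N ×ˢ Finset.range N,
              x p.1 * x p.2 * ((fun a b => F n a * F (n + m) b - F n b * F (n + m) a)
                (k + p.1 - 1) (k' + p.2 - 1)) := by
        rw [e1, e2, e3, e4]
        rw [Finset.sum_product]
        rw [Finset.sum_mul_sum, Finset.sum_mul_sum]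
        have hswap : ∑ i ∈ Finset.range N, ∑ j ∈ Finset.range N,
              (x i * F n (k' + i - 1)) * (x j * F (n + m) (k + j - 1))
            = ∑ i ∈ Finset.range N, ∑ j ∈ Finset.range N,
              (x j * F n (k' + j - 1)) * (x i * F (n + m) (k + i - 1)) :=
          Finset.sum_comm
        rw [hswap, ← Finset.sum_sub_distrib]
        refine Finset.sum_congr rfl fun i _ => ?_
        rw [← Finset.sum_sub_distrib]
        refine Finset.sum_congr rfl fun j _ => ?_
        ring
      linarith [key, hid]
  intro n n' hnn' k k' hk hkk'
  obtain ⟨m, rfl⟩ := Nat.exists_eq_add_of_le hnn'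
  exact main n m k k' hk hkk'
end

section
/- Let θ = (θ_1, θ_2, ...) be a non-negative summable sequence with 0 < Σ_i θ_i < ∞, and let e_k(θ) denote the k-th elementary symmetric function of the θ_i (e_0(θ) = 1). Then the sequence (e_k(θ))_{k≥0} is log-concave: e_k(θ)^2 ≥ e_{k-1}(θ)·e_{k+1}(θ) for all k ≥ 1, and it has no internal zeros. -/
/-- The `k`-th elementary symmetric function of a sequence `θ : ℕ → ℝ`:
the sum of the products `∏_{i ∈ s} θ i` over all `k`-element subsets `s` of `ℕ`. -/
noncomputable def esymmSeq (θ : ℕ → ℝ) (k : ℕ) : ℝ :=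
  ∑' s : {s : Finset ℕ // s.card = k}, ∏ i ∈ (s : Finset ℕ), θ i

open Finset

noncomputable def Efin (θ : ℕ → ℝ) (n k : ℕ) : ℝ :=
  ∑ s ∈ (Finset.range n).powersetCard k, ∏ i ∈ s, θ i

lemma Efin_zero (θ : ℕ → ℝ) (n : ℕ) : Efin θ n 0 = 1 := by
  simp [Efin]

lemma Efin_rec (θ : ℕ → ℝ) (n k : ℕ) :
    Efin θ (n+1) (k+1) = Efin θ n (k+1) + θ n * Efin θ n k := by
  have hn : n ∉ Finset.range n := by simp
  unfold Efin
  rw [Finset.range_add_one, Finset.powersetCard_succ_insert hn]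
  rw [Finset.sum_union]
  · congr 1
    rw [Finset.sum_image]
    · rw [Finset.mul_sum]
      refine Finset.sum_congr rfl fun s hs => ?_
      have hns : n ∉ s := fun h => hn (Finset.mem_powersetCard.1 hs |>.1 h)
      rw [Finset.prod_insert hns]
    · intro s hs t ht hst
      have hns : n ∉ s := fun h => hn (Finset.mem_powersetCard.1 hs |>.1 h)
      have hnt : n ∉ t := fun h => hn (Finset.mem_powersetCard.1 ht |>.1 h)
      have : (insert n s).erase n = (insert n t).erase n := by rw [hst]
      rwa [Finset.erase_insert hns, Finset.erase_insert hnt] at this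
  · rw [Finset.disjoint_right]
    intro s hs hs'
    obtain ⟨t, ht, rfl⟩ := Finset.mem_image.1 hs
    have := (Finset.mem_powersetCard.1 hs').1 (Finset.mem_insert_self n t)
    exact hn this

lemma Efin_emptyrange (θ : ℕ → ℝ) (k : ℕ) : Efin θ 0 (k+1) = 0 := by
  unfold Efin
  rw [Finset.range_zero, Finset.powersetCard_eq_empty.2 (by simp), Finset.sum_empty]

lemma Efin_nonneg (θ : ℕ → ℝ) (hθ0 : ∀ i, 0 ≤ θ i) (n k : ℕ) : 0 ≤ Efin θ n k :=
  Finset.sum_nonneg fun s _ => Finset.prod_nonneg fun i _ => hθ0 i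

/-- Main finite-case induction: log-concavity plus zero-propagation. -/
lemma Efin_prop (θ : ℕ → ℝ) (hθ0 : ∀ i, 0 ≤ θ i) (n : ℕ) :
    (∀ k, Efin θ n k * Efin θ n (k+2) ≤ (Efin θ n (k+1))^2) ∧
    (∀ k, Efin θ n k = 0 → Efin θ n (k+1) = 0) := by
  induction n with
  | zero =>
    constructor
    · intro k
      have h2 : Efin θ 0 (k+2) = 0 := Efin_emptyrange θ (k+1)
      rw [h2, mul_zero]
      positivity
    · intro k hk
      exact Efin_emptyrange θ k
  | succ n ih =>
    obtain ⟨h2, h3⟩ := ih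
    set a : ℕ → ℝ := Efin θ n with ha
    have h1 : ∀ k, 0 ≤ a k := Efin_nonneg θ hθ0 n
    set x := θ n with hx0
    have hx : 0 ≤ x := hθ0 n
    have hb : ∀ k, Efin θ (n+1) (k+1) = a (k+1) + x * a k := fun k => Efin_rec θ n k
    have hb0 : Efin θ (n+1) 0 = 1 := Efin_zero θ (n+1)
    -- middle inequality
    have hmid : ∀ j, a j * a (j+3) ≤ a (j+1) * a (j+2) := by
      intro j
      rcases eq_or_lt_of_le (h1 (j+1)) with h|h
      · have z2 : a (j+2) = 0 := h3 _ h.symm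
        have z3 : a (j+3) = 0 := h3 _ z2
        rw [z3, mul_zero]
        exact mul_nonneg (h1 _) (h1 _)
      rcases eq_or_lt_of_le (h1 (j+2)) with h'|h'
      · have z3 : a (j+3) = 0 := h3 _ h'.symm
        rw [z3, mul_zero]
        exact mul_nonneg (h1 _) (h1 _)
      · have k1 := h2 j
        have k2 := h2 (j+1)
        have hpos : 0 < a (j+1) * a (j+2) := mul_pos h h'
        rw [← mul_le_mul_iff_of_pos_right hpos]
        calc a j * a (j+3) * (a (j+1) * a (j+2))
            = (a j * a (j+2)) * (a (j+1) * a (j+3)) := by ring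
          _ ≤ (a (j+1))^2 * (a (j+2))^2 := by
              apply mul_le_mul k1 k2 (mul_nonneg (h1 _) (h1 _)) (by positivity)
          _ = a (j+1) * a (j+2) * (a (j+1) * a (j+2)) := by ring
    constructor
    · intro k
      match k with
      | 0 =>
        rw [hb0, hb 1, hb 0, one_mul]
        have ha0 : a 0 = 1 := Efin_zero θ n
        have h20 := h2 0
        norm_num at h20 ⊢
        rw [ha0] at h20 ⊢
        rw [one_mul] at h20
        nlinarith [mul_nonneg hx (h1 1), mul_nonneg hx hx]
      | (j+1) =>
        rw [hb j, hb (j+1), hb (j+2)]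
        have k1 := h2 j
        have k2 := h2 (j+1)
        have km := hmid j
        nlinarith [mul_nonneg hx (sub_nonneg.2 km),
          mul_nonneg (mul_nonneg hx hx) (sub_nonneg.2 k1),
          mul_nonneg hx (mul_nonneg (h1 (j+1)) (h1 (j+2)))]
    · intro k hk
      match k with
      | 0 => rw [hb0] at hk; norm_num at hk
      | (j+1) =>
        rw [hb j] at hk
        have e1 : a (j+1) = 0 ∧ x * a j = 0 :=
          (add_eq_zero_iff_of_nonneg (h1 _) (mul_nonneg hx (h1 _))).1 hk
        have e2 : a (j+2) = 0 := h3 _ e1.1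
        rw [hb (j+1), e2, e1.1, mul_zero, add_zero]

lemma Efin_logconcave (θ : ℕ → ℝ) (hθ0 : ∀ i, 0 ≤ θ i) (n k : ℕ) :
    Efin θ n k * Efin θ n (k+2) ≤ (Efin θ n (k+1))^2 :=
  (Efin_prop θ hθ0 n).1 k

lemma Efin_le_pow (θ : ℕ → ℝ) (hθ0 : ∀ i, 0 ≤ θ i) (n k : ℕ) :
    Efin θ n k ≤ (∑ i ∈ Finset.range n, θ i)^k := by
  induction n generalizing k with
  | zero =>
    match k with
    | 0 => simp [Efin]
    | (k+1) =>
      rw [Efin_emptyrange, Finset.range_zero, Finset.sum_empty]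
      simp
  | succ n ih =>
    have hS : 0 ≤ ∑ i ∈ Finset.range n, θ i := Finset.sum_nonneg fun i _ => hθ0 i
    have hx : 0 ≤ θ n := hθ0 n
    rw [Finset.sum_range_succ]
    match k with
    | 0 => simp [Efin_zero]
    | (k+1) =>
      rw [Efin_rec]
      set S := ∑ i ∈ Finset.range n, θ i
      calc Efin θ n (k+1) + θ n * Efin θ n k ≤ S^(k+1) + θ n * S^k := by
            have := ih (k+1)
            have := ih k
            nlinarith [Efin_nonneg θ hθ0 n k]
        _ ≤ (S + θ n)^(k+1) := by
            have h2 : S^k ≤ (S + θ n)^k := pow_le_pow_left₀ hS (by linarith) k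
            have h3 : (S + θ n) * S^k ≤ (S + θ n) * (S + θ n)^k :=
              mul_le_mul_of_nonneg_left h2 (by linarith)
            rw [pow_succ, pow_succ]
            nlinarith [h3]

section Limits

variable (θ : ℕ → ℝ)

/-- The finset of subsets of `range n` of cardinality `k`, as a finset of the subtype. -/
noncomputable def Tfin (n k : ℕ) : Finset {s : Finset ℕ // s.card = k} :=
  ((Finset.range n).powersetCard k).subtype _

lemma mem_Tfin {n k : ℕ} {s : {s : Finset ℕ // s.card = k}} :
    s ∈ Tfin n k ↔ (s : Finset ℕ) ⊆ Finset.range n := by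
  simp [Tfin, Finset.mem_subtype, Finset.mem_powersetCard, s.2]

lemma sum_Tfin (n k : ℕ) :
    ∑ s ∈ Tfin n k, ∏ i ∈ (s : Finset ℕ), θ i = Efin θ n k := by
  unfold Tfin Efin
  exact Finset.sum_subtype_of_mem (fun t => ∏ i ∈ t, θ i)
    (fun s hs => (Finset.mem_powersetCard.1 hs).2)

lemma prod_summable (hθ0 : ∀ i, 0 ≤ θ i) (hsum : Summable θ) (k : ℕ) :
    Summable (fun s : {s : Finset ℕ // s.card = k} => ∏ i ∈ (s : Finset ℕ), θ i) := by
  apply summable_of_sum_le (c := (∑' i, θ i) ^ k)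
  · intro s
    exact Finset.prod_nonneg fun i _ => hθ0 i
  · intro u
    set n : ℕ := (u.sup fun s => (s : Finset ℕ).sup id) + 1 with hn
    have hsub : ∀ s ∈ u, (s : Finset ℕ) ⊆ Finset.range n := by
      intro s hs i hi
      rw [Finset.mem_range, hn]
      have h1 : i ≤ (s : Finset ℕ).sup id := Finset.le_sup (f := id) hi
      have h2 : (s : Finset ℕ).sup id ≤ u.sup fun s => (s : Finset ℕ).sup id :=
        Finset.le_sup (f := fun (s : {s : Finset ℕ // s.card = k}) => (s : Finset ℕ).sup id) hs
      omega
    have key : ∑ s ∈ u, ∏ i ∈ (s : Finset ℕ), θ i ≤ Efin θ n k := by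
      have hu : u ⊆ Tfin n k := fun s hs => mem_Tfin.2 (hsub s hs)
      rw [← sum_Tfin θ n k]
      apply Finset.sum_le_sum_of_subset_of_nonneg hu
      intro s _ _
      exact Finset.prod_nonneg fun i _ => hθ0 i
    refine key.trans ((Efin_le_pow θ hθ0 n k).trans ?_)
    apply pow_le_pow_left₀ (Finset.sum_nonneg fun i _ => hθ0 i)
    exact Summable.sum_le_tsum _ (fun i _ => hθ0 i) hsum

lemma tendsto_Efin (hθ0 : ∀ i, 0 ≤ θ i) (hsum : Summable θ) (k : ℕ) :
    Filter.Tendsto (fun n => Efin θ n k) Filter.atTop (nhds (esymmSeq θ k)) := by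
  have hs := (prod_summable θ hθ0 hsum k).hasSum
  have hmono : Monotone (fun n => Tfin n k) := by
    intro m n hmn s hsm
    exact mem_Tfin.2 ((mem_Tfin.1 hsm).trans (Finset.range_subset_range.2 hmn))
  have hcof : ∀ s : {s : Finset ℕ // s.card = k}, ∃ n, s ∈ Tfin n k := by
    intro s
    refine ⟨(s : Finset ℕ).sup id + 1, mem_Tfin.2 fun i hi => ?_⟩
    rw [Finset.mem_range]
    have h1 : i ≤ (s : Finset ℕ).sup id := Finset.le_sup (f := id) hi
    omega
  have htt := Filter.tendsto_atTop_finset_of_monotone hmono hcof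
  have := hs.comp htt
  refine this.congr fun n => ?_
  exact sum_Tfin θ n k

end Limits

theorem stmt5 (θ : ℕ → ℝ) (hθ0 : ∀ i, 0 ≤ θ i) (hsum : Summable θ)
    (hpos : 0 < ∑' i, θ i) :
    (∀ k : ℕ, 1 ≤ k → esymmSeq θ (k - 1) * esymmSeq θ (k + 1) ≤ (esymmSeq θ k) ^ 2) ∧
    (∀ i j k : ℕ, i ≤ k → k ≤ j →
      esymmSeq θ i ≠ 0 → esymmSeq θ j ≠ 0 → esymmSeq θ k ≠ 0) := by
  have hlim := tendsto_Efin θ hθ0 hsum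
  constructor
  · intro k hk
    obtain ⟨m, rfl⟩ : ∃ m, k = m + 1 := ⟨k - 1, by omega⟩
    simp only [Nat.add_sub_cancel]
    refine le_of_tendsto_of_tendsto' ((hlim m).mul (hlim (m + 2)))
      ((hlim (m + 1)).pow 2) fun n => ?_
    exact Efin_logconcave θ hθ0 n m
  · have key : ∀ j k : ℕ, k ≤ j → esymmSeq θ j ≠ 0 → esymmSeq θ k ≠ 0 := by
      intro j k hkj hj
      have hex : ∃ s : {s : Finset ℕ // s.card = j}, ∏ i ∈ (s : Finset ℕ), θ i ≠ 0 := by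
        by_contra h
        push_neg at h
        apply hj
        unfold esymmSeq
        rw [tsum_congr h, tsum_zero]
      obtain ⟨s, hsne⟩ := hex
      have hpos' : ∀ i ∈ (s : Finset ℕ), 0 < θ i := by
        intro i hi
        refine lt_of_le_of_ne (hθ0 i) fun h => hsne ?_
        exact Finset.prod_eq_zero hi h.symm
      obtain ⟨t, hts, htc⟩ := Finset.exists_subset_card_eq (s := (s : Finset ℕ)) (n := k) (by rw [s.2]; exact hkj)
      have htp : 0 < ∏ i ∈ t, θ i := Finset.prod_pos fun i hi => hpos' i (hts hi)
      have hle : ∏ i ∈ t, θ i ≤ esymmSeq θ k :=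
        Summable.le_tsum (prod_summable θ hθ0 hsum k) ⟨t, htc⟩
          (fun s' _ => Finset.prod_nonneg fun i _ => hθ0 i)
      exact (htp.trans_le hle).ne'
    intro i j k _ hkj _ hj
    exact key j k hkj hj
end

section
/- The convolution of two non-negative log-concave sequences is log-concave. That is, if (a_i)_{i≥0} and (b_i)_{i≥0} are non-negative sequences each satisfying x_i^2 ≥ x_{i-1}x_{i+1} for all i ≥ 1 and having no internal zeros, then c_k = Σ_{i=0}^{k} a_i b_{k-i} defines a sequence (c_k)_{k≥0} with the same two properties. -/
/-- Shift of a sequence: `Aseq a 0 = 0`, `Aseq a (s+1) = a s`. -/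
noncomputable def Aseq (a : ℕ → ℝ) (s : ℕ) : ℝ := if s = 0 then 0 else a (s - 1)

/-- Reversed truncated sequence. -/
noncomputable def Bseq (b : ℕ → ℝ) (m s : ℕ) : ℝ := if s ≤ m then b (m - s) else 0

lemma Aseq_zero (a : ℕ → ℝ) : Aseq a 0 = 0 := if_pos rfl

lemma Aseq_succ (a : ℕ → ℝ) (s : ℕ) : Aseq a (s + 1) = a s := by
  simp [Aseq]

lemma Bseq_of_le (b : ℕ → ℝ) {m s : ℕ} (h : s ≤ m) : Bseq b m s = b (m - s) := if_pos h

lemma Bseq_of_gt (b : ℕ → ℝ) {m s : ℕ} (h : m < s) : Bseq b m s = 0 := if_neg (by omega)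

lemma Bseq_nonneg (b : ℕ → ℝ) (hb : ∀ i, 0 ≤ b i) (m s : ℕ) : 0 ≤ Bseq b m s := by
  unfold Bseq
  split
  · exact hb _
  · exact le_refl 0

lemma lc_ratio (x : ℕ → ℝ) (hx0 : ∀ i, 0 ≤ x i)
    (hlc : ∀ i : ℕ, 1 ≤ i → x (i - 1) * x (i + 1) ≤ (x i) ^ 2)
    (hniz : ∀ i j k : ℕ, i ≤ k → k ≤ j → x i ≠ 0 → x j ≠ 0 → x k ≠ 0) :
    ∀ i j : ℕ, i ≤ j → x i * x (j + 1) ≤ x (i + 1) * x j := by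
  have key : ∀ d i : ℕ, x i * x (i + d + 1) ≤ x (i + 1) * x (i + d) := by
    intro d
    induction d with
    | zero => intro i; simp [mul_comm]
    | succ d ih =>
      intro i
      have hgoal : x i * x (i + d + 2) ≤ x (i + 1) * x (i + d + 1) := by
        by_cases h : x (i + d + 1) = 0
        · have h0 : x i * x (i + d + 2) = 0 := by
            by_contra hne
            have hxi : x i ≠ 0 := fun h' => hne (by rw [h']; ring)
            have hxj : x (i + d + 2) ≠ 0 := fun h' => hne (by rw [h']; ring)
            exact hniz i (i + d + 2) (i + d + 1) (by omega) (by omega) hxi hxj h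
          rw [h0]
          exact mul_nonneg (hx0 _) (hx0 _)
        · have hpos : 0 < x (i + d + 1) := lt_of_le_of_ne (hx0 _) (Ne.symm h)
          have h1 := ih i
          have h2 := hlc (i + d + 1) (by omega)
          have h2' : x (i + d) * x (i + d + 2) ≤ x (i + d + 1) ^ 2 := by
            have e1 : i + d + 1 - 1 = i + d := by omega
            have e2 : i + d + 1 + 1 = i + d + 2 := by omega
            rw [e1, e2] at h2
            exact h2
          have hmul : x i * x (i + d + 2) * x (i + d + 1) ≤
              x (i + 1) * x (i + d + 1) * x (i + d + 1) := by
            nlinarith [hx0 i, hx0 (i + 1), hx0 (i + d), hx0 (i + d + 2), hx0 (i + d + 1)]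
          exact le_of_mul_le_mul_right hmul hpos
      have e1 : i + (d + 1) + 1 = i + d + 2 := by omega
      have e2 : i + (d + 1) = i + d + 1 := by omega
      rw [e1, e2]
      exact hgoal
  intro i j hij
  obtain ⟨d, rfl⟩ : ∃ d, j = i + d := ⟨j - i, by omega⟩
  exact key d i

lemma pairing (S : Finset ℕ) (F : ℕ → ℕ → ℝ) (hdiag : ∀ s, F s s = 0) :
    ∑ p ∈ S ×ˢ S, F p.1 p.2 =
      ∑ p ∈ (S ×ˢ S).filter (fun p => p.1 < p.2), (F p.1 p.2 + F p.2 p.1) := by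
  rw [← Finset.sum_filter_add_sum_filter_not (S ×ˢ S) (fun p => p.1 < p.2)
      (fun p => F p.1 p.2)]
  have hrest : ∑ p ∈ (S ×ˢ S).filter (fun p => ¬ p.1 < p.2), F p.1 p.2 =
      ∑ p ∈ (S ×ˢ S).filter (fun p => p.1 < p.2), F p.2 p.1 := by
    have hsub : (S ×ˢ S).filter (fun p => p.2 < p.1) ⊆
        (S ×ˢ S).filter (fun p => ¬ p.1 < p.2) := by
      intro p hp
      simp only [Finset.mem_filter] at hp ⊢
      exact ⟨hp.1, by omega⟩
    have h1 : ∑ p ∈ (S ×ˢ S).filter (fun p => ¬ p.1 < p.2), F p.1 p.2 =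
        ∑ p ∈ (S ×ˢ S).filter (fun p => p.2 < p.1), F p.1 p.2 := by
      refine (Finset.sum_subset hsub ?_).symm
      intro p hp hnp
      simp only [Finset.mem_filter, not_and, not_lt] at hp hnp
      have heq : p.1 = p.2 := by
        have := hnp hp.1
        omega
      calc F p.1 p.2 = F p.2 p.2 := by rw [heq]
        _ = 0 := hdiag p.2
    rw [h1]
    refine Finset.sum_nbij' (fun p => Prod.swap p) (fun p => Prod.swap p) ?_ ?_ ?_ ?_ ?_
    · intro p hp
      simp only [Finset.mem_filter, Finset.mem_product, Prod.fst_swap, Prod.snd_swap] at hp ⊢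
      exact ⟨⟨hp.1.2, hp.1.1⟩, hp.2⟩
    · intro p hp
      simp only [Finset.mem_filter, Finset.mem_product, Prod.fst_swap, Prod.snd_swap] at hp ⊢
      exact ⟨⟨hp.1.2, hp.1.1⟩, hp.2⟩
    · intro p _; rfl
    · intro p _; rfl
    · intro p _; rfl
  rw [hrest, ← Finset.sum_add_distrib]

lemma sumA (a : ℕ → ℝ) (g : ℕ → ℝ) (n : ℕ) :
    ∑ s ∈ Finset.range (n + 1), Aseq a s * g s = ∑ j ∈ Finset.range n, a j * g (j + 1) := by
  rw [Finset.sum_range_succ']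
  simp [Aseq]

lemma sumB (a b : ℕ → ℝ) (cm : ℝ) (m N : ℕ) (h : m + 1 ≤ N)
    (hcm : cm = ∑ i ∈ Finset.range (m + 1), a i * b (m - i)) :
    ∑ s ∈ Finset.range N, a s * Bseq b m s = cm := by
  rw [hcm]
  rw [← Finset.sum_subset (Finset.range_subset_range.mpr h)
      (fun x _ hx => by
        have hxm : m < x := by
          simp only [Finset.mem_range, not_lt] at hx
          omega
        rw [Bseq_of_gt b hxm, mul_zero])]
  apply Finset.sum_congr rfl
  intro i hi
  simp only [Finset.mem_range] at hi
  rw [Bseq_of_le b (by omega : i ≤ m)]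

lemma Bshift (b : ℕ → ℝ) (k : ℕ) (hk : 1 ≤ k) (j : ℕ) :
    Bseq b k (j + 1) = Bseq b (k - 1) j := by
  unfold Bseq
  by_cases h : j + 1 ≤ k
  · rw [if_pos h, if_pos (by omega)]
    congr 1
    omega
  · rw [if_neg h, if_neg (by omega)]

theorem stmt6 (a b c : ℕ → ℝ)
    (ha0 : ∀ i, 0 ≤ a i) (hb0 : ∀ i, 0 ≤ b i)
    (halc : ∀ i : ℕ, 1 ≤ i → a (i - 1) * a (i + 1) ≤ (a i) ^ 2)
    (hblc : ∀ i : ℕ, 1 ≤ i → b (i - 1) * b (i + 1) ≤ (b i) ^ 2)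
    (haniz : ∀ i j k : ℕ, i ≤ k → k ≤ j → a i ≠ 0 → a j ≠ 0 → a k ≠ 0)
    (hbniz : ∀ i j k : ℕ, i ≤ k → k ≤ j → b i ≠ 0 → b j ≠ 0 → b k ≠ 0)
    (hc : ∀ k, c k = ∑ i ∈ Finset.range (k + 1), a i * b (k - i)) :
    (∀ k, 0 ≤ c k) ∧
    (∀ k : ℕ, 1 ≤ k → c (k - 1) * c (k + 1) ≤ (c k) ^ 2) ∧
    (∀ i j k : ℕ, i ≤ k → k ≤ j → c i ≠ 0 → c j ≠ 0 → c k ≠ 0) := by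
  have hra := lc_ratio a ha0 halc haniz
  have hrb := lc_ratio b hb0 hblc hbniz
  have hc0 : ∀ k, 0 ≤ c k := by
    intro k
    rw [hc k]
    exact Finset.sum_nonneg fun i _ => mul_nonneg (ha0 i) (hb0 (k - i))
  refine ⟨hc0, ?_, ?_⟩
  · intro k hk
    set S := Finset.range (k + 3) with hS
    have h1 : c (k - 1) = ∑ s ∈ S, Aseq a s * Bseq b k s := by
      rw [hS, show k + 3 = (k + 2) + 1 from rfl, sumA]
      simp_rw [Bshift b k hk]
      exact (sumB a b (c (k - 1)) (k - 1) (k + 2) (by omega) (hc (k - 1))).symm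
    have h2 : c k = ∑ s ∈ S, Aseq a s * Bseq b (k + 1) s := by
      rw [hS, show k + 3 = (k + 2) + 1 from rfl, sumA]
      have hsh : ∀ j, Bseq b (k + 1) (j + 1) = Bseq b k j := by
        intro j
        simpa using Bshift b (k + 1) (by omega) j
      simp_rw [hsh]
      exact (sumB a b (c k) k (k + 2) (by omega) (hc k)).symm
    have h3 : c k = ∑ s ∈ S, a s * Bseq b k s :=
      (sumB a b (c k) k (k + 3) (by omega) (hc k)).symm
    have h4 : c (k + 1) = ∑ s ∈ S, a s * Bseq b (k + 1) s :=
      (sumB a b (c (k + 1)) (k + 1) (k + 3) (by omega) (hc (k + 1))).symm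
    set F : ℕ → ℕ → ℝ := fun s t => (Aseq a s * a t) *
      (Bseq b k s * Bseq b (k + 1) t - Bseq b (k + 1) s * Bseq b k t) with hF
    have hckck : c k * c k =
        (∑ s ∈ S, Aseq a s * Bseq b (k + 1) s) * (∑ s ∈ S, a s * Bseq b k s) := by
      rw [← h2, ← h3]
    have expand : c (k - 1) * c (k + 1) - c k * c k = ∑ p ∈ S ×ˢ S, F p.1 p.2 := by
      rw [h1, h4, hckck, Finset.sum_mul_sum, Finset.sum_mul_sum,
        ← Finset.sum_product', ← Finset.sum_product', ← Finset.sum_sub_distrib]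
      apply Finset.sum_congr rfl
      intro p _
      simp only [hF]
      ring
    have hdiag : ∀ s, F s s = 0 := by intro s; simp only [hF]; ring
    have hnonpos : ∑ p ∈ (S ×ˢ S).filter (fun p => p.1 < p.2), (F p.1 p.2 + F p.2 p.1) ≤ 0 := by
      apply Finset.sum_nonpos
      intro p hp
      obtain ⟨s, t⟩ := p
      simp only [Finset.mem_filter] at hp
      obtain ⟨-, hlt⟩ := hp
      replace hlt : s < t := hlt
      have hcomb : F s t + F t s = (Aseq a s * a t - a s * Aseq a t) *
          (Bseq b k s * Bseq b (k + 1) t - Bseq b (k + 1) s * Bseq b k t) := by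
        simp only [hF]; ring
      rw [hcomb]
      have hAfac : Aseq a s * a t - a s * Aseq a t ≤ 0 := by
        obtain ⟨t', rfl⟩ : ∃ t', t = t' + 1 := ⟨t - 1, by omega⟩
        rcases Nat.eq_zero_or_pos s with hs | hs
        · subst hs
          rw [Aseq_zero, Aseq_succ]
          nlinarith [ha0 0, ha0 t']
        · obtain ⟨s', rfl⟩ : ∃ s', s = s' + 1 := ⟨s - 1, by omega⟩
          rw [Aseq_succ, Aseq_succ]
          have := hra s' t' (by omega)
          nlinarith [this]
      have hBfac : 0 ≤ Bseq b k s * Bseq b (k + 1) t - Bseq b (k + 1) s * Bseq b k t := by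
        rcases le_or_gt t k with h4' | h4'
        · rw [Bseq_of_le b (show s ≤ k by omega), Bseq_of_le b (show t ≤ k + 1 by omega),
            Bseq_of_le b (show s ≤ k + 1 by omega), Bseq_of_le b h4']
          have key := hrb (k - t) (k - s) (by omega)
          have e1 : k - t + 1 = k + 1 - t := by omega
          have e2 : k - s + 1 = k + 1 - s := by omega
          rw [e1, e2] at key
          nlinarith [key]
        · rw [Bseq_of_gt b h4', mul_zero, sub_zero]
          exact mul_nonneg (Bseq_nonneg b hb0 k s) (Bseq_nonneg b hb0 (k + 1) t)
      nlinarith [hAfac, hBfac]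
    rw [pairing S F hdiag] at expand
    nlinarith [expand, hnonpos]
  · intro i j k hik hkj hci hcj
    have hterm : ∀ m : ℕ, c m ≠ 0 → ∃ p, p ≤ m ∧ a p ≠ 0 ∧ b (m - p) ≠ 0 := by
      intro m hm
      by_contra hno
      push_neg at hno
      apply hm
      rw [hc m]
      apply Finset.sum_eq_zero
      intro p hp
      simp only [Finset.mem_range] at hp
      have hpm : p ≤ m := by omega
      rcases Classical.em (a p = 0) with h | h
      · rw [h, zero_mul]
      · rcases Classical.em (b (m - p) = 0) with h' | h'
        · rw [h', mul_zero]
        · exact absurd h' (by have := hno p hpm; tauto)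
    obtain ⟨p, hpm, hap, hbp⟩ := hterm i hci
    obtain ⟨q, hqn, haq, hbq⟩ := hterm j hcj
    set r : ℕ := max (min p q) (k - max (i - p) (j - q)) with hr
    have hr1 : min p q ≤ r := le_max_left _ _
    have hr2 : r ≤ max p q := by omega
    have hrk : r ≤ k := by omega
    have har : a r ≠ 0 := by
      rcases le_total p q with h | h
      · exact haniz p q r (by omega) (by omega) hap haq
      · exact haniz q p r (by omega) (by omega) haq hap
    have hbr : b (k - r) ≠ 0 := by
      rcases le_total (i - p) (j - q) with h | h
      · exact hbniz (i - p) (j - q) (k - r) (by omega) (by omega) hbp hbq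
      · exact hbniz (j - q) (i - p) (k - r) (by omega) (by omega) hbq hbp
    intro hck
    have hpos : (0:ℝ) < a r * b (k - r) :=
      mul_pos (lt_of_le_of_ne (ha0 r) (Ne.symm har)) (lt_of_le_of_ne (hb0 _) (Ne.symm hbr))
    have hle : a r * b (k - r) ≤ c k := by
      rw [hc k]
      exact Finset.single_le_sum (fun i _ => mul_nonneg (ha0 i) (hb0 (k - i)))
        (Finset.mem_range.mpr (by omega))
    rw [hck] at hle
    linarith
end

section
/- Let θ be a non-negative summable sequence with 0 < Σ_i θ_i < ∞, let 0 ≤ k < N_θ (the number of nonzero entries of θ), and let i ∈ {1,2,...}. Define B_k^θ(S) = (Π_{j∈S} θ_j)/e_k(θ) for each k-element subset S of {1,2,...}. Then the probability that a B_k^θ-distributed random set contains i is at most the probability that a B_{k+1}^θ-distributed random set contains i; equivalently, θ_i·e_{k-1}(θ^{(i)})/e_k(θ) ≤ θ_i·e_k(θ^{(i)})/e_{k+1}(θ), where θ^{(i)} is θ with its i-th coordinate set to 0. -/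
open Finset Filter

noncomputable def fe (θ : ℕ → ℝ) (E : Finset ℕ) (k : ℕ) : ℝ :=
  ∑ s ∈ E.powersetCard k, ∏ j ∈ s, θ j


lemma fe_nonneg (θ : ℕ → ℝ) (h : ∀ j, 0 ≤ θ j) (E : Finset ℕ) (k : ℕ) : 0 ≤ fe θ E k :=
  Finset.sum_nonneg fun s _ => Finset.prod_nonneg fun j _ => h j

lemma fe_zero (θ : ℕ → ℝ) (E : Finset ℕ) : fe θ E 0 = 1 := by simp [fe]

lemma fe_insert (θ : ℕ → ℝ) {a : ℕ} {E : Finset ℕ} (ha : a ∉ E) (k : ℕ) :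
    fe θ (insert a E) (k+1) = fe θ E (k+1) + θ a * fe θ E k := by
  unfold fe
  rw [Finset.powersetCard_succ_insert ha, Finset.sum_union, Finset.sum_image, Finset.mul_sum]
  · congr 1
    refine Finset.sum_congr rfl fun s hs => ?_
    rw [Finset.mem_powersetCard] at hs
    rw [Finset.prod_insert (fun hc => ha (hs.1 hc))]
  · intro s hs t ht hst
    rw [Finset.mem_coe, Finset.mem_powersetCard] at hs ht
    have has : a ∉ s := fun hc => ha (hs.1 hc)
    have hat : a ∉ t := fun hc => ha (ht.1 hc)
    rw [← Finset.erase_insert has, ← Finset.erase_insert hat, hst]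
  · rw [Finset.disjoint_left]
    intro s hs hs'
    rw [Finset.mem_powersetCard] at hs
    rw [Finset.mem_image] at hs'
    obtain ⟨t, _, rfl⟩ := hs'
    exact ha (hs.1 (Finset.mem_insert_self a t))

lemma fe_vanish (θ : ℕ → ℝ) (h0 : ∀ j, 0 ≤ θ j) (E : Finset ℕ) (m : ℕ)
    (h : fe θ E m = 0) : fe θ E (m+1) = 0 := by
  unfold fe at h ⊢
  have hterm : ∀ t ∈ E.powersetCard m, ∏ j ∈ t, θ j = 0 := by
    intro t ht
    have := (Finset.sum_eq_zero_iff_of_nonneg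
      (fun t _ => Finset.prod_nonneg fun j _ => h0 j)).1 h
    exact this t ht
  refine Finset.sum_eq_zero fun s hs => ?_
  rw [Finset.mem_powersetCard] at hs
  obtain ⟨t, hts, htc⟩ := Finset.exists_subset_card_eq (show m ≤ s.card by omega)
  have ht0 : ∏ j ∈ t, θ j = 0 :=
    hterm t (Finset.mem_powersetCard.2 ⟨hts.trans hs.1, htc⟩)
  rw [← Finset.prod_sdiff hts, ht0, mul_zero]

lemma newton_ad (A B C D : ℝ) (hB : 0 ≤ B) (hD : 0 ≤ D)
    (hbc : 0 < B * C) (h1 : A * C ≤ B ^ 2) (h2 : B * D ≤ C ^ 2) : A * D ≤ B * C := by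
  have h := mul_le_mul h1 h2 (mul_nonneg hB hD) (sq_nonneg B)
  have key : (A * D) * (B * C) ≤ (B * C) * (B * C) := by nlinarith [h]
  exact le_of_mul_le_mul_right key hbc

lemma newton_step (A B C D t : ℝ) (hA : 0 ≤ A) (hB : 0 ≤ B) (hC : 0 ≤ C) (hD : 0 ≤ D)
    (ht : 0 ≤ t) (h1 : A * C ≤ B ^ 2) (h2 : B * D ≤ C ^ 2) (h3 : A * D ≤ B * C) :
    (B + t * A) * (D + t * C) ≤ (C + t * B) ^ 2 := by
  nlinarith [mul_le_mul_of_nonneg_left h3 ht, mul_le_mul_of_nonneg_left h1 (mul_nonneg ht ht),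
    mul_nonneg ht (mul_nonneg hB hC)]

lemma fe_newton (θ : ℕ → ℝ) (h0 : ∀ j, 0 ≤ θ j) (E : Finset ℕ) :
    ∀ k, fe θ E k * fe θ E (k+2) ≤ fe θ E (k+1)^2 := by
  induction E using Finset.induction_on with
  | empty =>
    intro k
    have : fe θ ∅ (k+2) = 0 := by
      have : Finset.powersetCard (k+2) (∅ : Finset ℕ) = ∅ :=
        Finset.powersetCard_eq_empty.2 (by simp)
      simp [fe, this]
    rw [this, mul_zero]
    exact sq_nonneg _
  | @insert a E ha ih =>
    intro k
    have hAD : ∀ m, fe θ E m * fe θ E (m+3) ≤ fe θ E (m+1) * fe θ E (m+2) := by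
      intro m
      rcases eq_or_lt_of_le (mul_nonneg (fe_nonneg θ h0 E (m+1)) (fe_nonneg θ h0 E (m+2)))
        with hbc | hbc
      · -- B*C = 0 : B = 0 or C = 0, then D = 0
        have : fe θ E (m+1) = 0 ∨ fe θ E (m+2) = 0 := by
          rcases mul_eq_zero.1 hbc.symm with h | h
          · exact Or.inl h
          · exact Or.inr h
        have hD : fe θ E (m+3) = 0 := by
          rcases this with h | h
          · exact fe_vanish θ h0 E (m+2) (fe_vanish θ h0 E (m+1) h)
          · exact fe_vanish θ h0 E (m+2) h
        rw [hD, mul_zero, ← hbc]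
      · exact newton_ad _ _ _ _ (fe_nonneg θ h0 E (m+1)) (fe_nonneg θ h0 E (m+3)) hbc
          (ih m) (ih (m+1))
    match k with
    | 0 =>
      rw [fe_insert θ ha 1, fe_insert θ ha 0, fe_zero, fe_zero]
      have h1 := ih 0
      rw [fe_zero] at h1
      nlinarith [fe_nonneg θ h0 E 1, fe_nonneg θ h0 E 2, h0 a]
    | (m+1) =>
      rw [fe_insert θ ha m, fe_insert θ ha (m+1), fe_insert θ ha (m+2)]
      exact newton_step _ _ _ _ _ (fe_nonneg θ h0 E m) (fe_nonneg θ h0 E (m+1))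
        (fe_nonneg θ h0 E (m+2)) (fe_nonneg θ h0 E (m+3)) (h0 a) (ih m) (ih (m+1)) (hAD m)

lemma fe_le_pow (θ : ℕ → ℝ) (h0 : ∀ j, 0 ≤ θ j) (E : Finset ℕ) :
    ∀ k, fe θ E k ≤ (∑ j ∈ E, θ j) ^ k := by
  induction E using Finset.induction_on with
  | empty =>
    intro k
    match k with
    | 0 => rw [fe_zero]; simp
    | (m+1) =>
      have : Finset.powersetCard (m+1) (∅ : Finset ℕ) = ∅ :=
        Finset.powersetCard_eq_empty.2 (by simp)
      simp [fe, this]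
  | @insert a E ha ih =>
    intro k
    have hS : 0 ≤ ∑ j ∈ E, θ j := Finset.sum_nonneg fun j _ => h0 j
    rw [Finset.sum_insert ha]
    match k with
    | 0 => rw [fe_zero]; simp
    | (m+1) =>
      rw [fe_insert θ ha m]
      have h1 : fe θ E (m+1) ≤ (∑ j ∈ E, θ j) ^ (m+1) := ih (m+1)
      have h2 : fe θ E m ≤ (∑ j ∈ E, θ j) ^ m := ih m
      have h3 : (∑ j ∈ E, θ j) ^ m ≤ (θ a + ∑ j ∈ E, θ j) ^ m :=
        pow_le_pow_left₀ hS (by linarith [h0 a]) m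
      have h4 : (∑ j ∈ E, θ j) ^ (m+1) ≤ (θ a + ∑ j ∈ E, θ j) ^ (m+1) :=
        pow_le_pow_left₀ hS (by linarith [h0 a]) (m+1)
      have expand : (θ a + ∑ j ∈ E, θ j) ^ (m+1)
          = (θ a + ∑ j ∈ E, θ j) * (θ a + ∑ j ∈ E, θ j) ^ m := by ring
      have key : (∑ j ∈ E, θ j) ^ (m+1) + θ a * (∑ j ∈ E, θ j) ^ m
          ≤ (θ a + ∑ j ∈ E, θ j) ^ (m+1) := by
        rw [expand, add_mul]
        have : (∑ j ∈ E, θ j) ^ (m+1) ≤ (∑ j ∈ E, θ j) * (θ a + ∑ j ∈ E, θ j) ^ m := by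
          rw [pow_succ']
          exact mul_le_mul_of_nonneg_left h3 hS
        nlinarith [mul_le_mul_of_nonneg_left h3 (h0 a)]
      calc fe θ E (m+1) + θ a * fe θ E m
          ≤ (∑ j ∈ E, θ j) ^ (m+1) + θ a * (∑ j ∈ E, θ j) ^ m := by
            have := mul_le_mul_of_nonneg_left h2 (h0 a); linarith
        _ ≤ (θ a + ∑ j ∈ E, θ j) ^ (m+1) := key

lemma esymm_summable (θ : ℕ → ℝ) (h0 : ∀ j, 0 ≤ θ j) (hsum : Summable θ) (k : ℕ) :
    Summable (fun s : {s : Finset ℕ // s.card = k} => ∏ j ∈ (s : Finset ℕ), θ j) := by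
  apply summable_of_sum_le (c := (∑' j, θ j) ^ k)
  · intro s
    exact Finset.prod_nonneg fun j _ => h0 j
  · intro u
    obtain ⟨n, hn⟩ := (u.sup fun s => (s : Finset ℕ)).exists_nat_subset_range
    have step1 : ∑ x ∈ u, ∏ j ∈ (x : Finset ℕ), θ j
        = ∑ s ∈ u.image (Subtype.val), ∏ j ∈ s, θ j := by
      rw [Finset.sum_image (fun x _ y _ h => Subtype.ext h)]
    have hsub : u.image (Subtype.val) ⊆ (Finset.range n).powersetCard k := by
      intro s hs
      rw [Finset.mem_image] at hs
      obtain ⟨x, hx, rfl⟩ := hs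
      refine Finset.mem_powersetCard.2 ⟨?_, x.2⟩
      exact (Finset.le_sup hx).trans hn
    calc ∑ x ∈ u, ∏ j ∈ (x : Finset ℕ), θ j
        ≤ fe θ (Finset.range n) k := by
          rw [step1]
          exact Finset.sum_le_sum_of_subset_of_nonneg hsub
            (fun s _ _ => Finset.prod_nonneg fun j _ => h0 j)
      _ ≤ (∑ j ∈ Finset.range n, θ j) ^ k := fe_le_pow θ h0 _ k
      _ ≤ (∑' j, θ j) ^ k := by
          apply pow_le_pow_left₀ (Finset.sum_nonneg fun j _ => h0 j)
          exact Summable.sum_le_tsum _ (fun j _ => h0 j) hsum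

lemma fe_tendsto (θ : ℕ → ℝ) (h0 : ∀ j, 0 ≤ θ j) (hsum : Summable θ) (k : ℕ) :
    Tendsto (fun n => fe θ (Finset.range n) k) atTop (nhds (esymmSeq θ k)) := by
  have hs := esymm_summable θ h0 hsum k
  have H := hs.hasSum
  set F : ℕ → Finset {s : Finset ℕ // s.card = k} :=
    fun n => ((Finset.range n).powersetCard k).subtype (fun s => s.card = k) with hF
  have hFmono : Monotone F := by
    intro m n hmn x hx
    rw [Finset.mem_subtype] at hx ⊢
    exact Finset.powersetCard_mono (Finset.range_subset_range.2 hmn) hx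
  have hFex : ∀ x : {s : Finset ℕ // s.card = k}, ∃ n, x ∈ F n := by
    intro x
    obtain ⟨n, hn⟩ := (x : Finset ℕ).exists_nat_subset_range
    exact ⟨n, Finset.mem_subtype.2 (Finset.mem_powersetCard.2 ⟨hn, x.2⟩)⟩
  have hT : Tendsto F atTop atTop := tendsto_atTop_finset_of_monotone hFmono hFex
  have hcomp : Tendsto (fun n => ∑ x ∈ F n, ∏ j ∈ (x : Finset ℕ), θ j) atTop
      (nhds (esymmSeq θ k)) := H.comp hT
  have heq : ∀ n, ∑ x ∈ F n, ∏ j ∈ (x : Finset ℕ), θ j = fe θ (Finset.range n) k := by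
    intro n
    show ∑ x ∈ ((Finset.range n).powersetCard k).subtype (fun s => s.card = k),
        ∏ j ∈ (x : Finset ℕ), θ j = _
    unfold fe
    exact Finset.sum_subtype_of_mem (fun s => ∏ j ∈ s, θ j) (fun s hs => (Finset.mem_powersetCard.1 hs).2)
  exact hcomp.congr heq

lemma fe_congr_of_not_mem (θ : ℕ → ℝ) (i : ℕ) {E : Finset ℕ} (hi : i ∉ E) (k : ℕ) :
    fe (Function.update θ i 0) E k = fe θ E k := by
  unfold fe
  refine Finset.sum_congr rfl fun s hs => Finset.prod_congr rfl fun j hj => ?_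
  have hs' := (Finset.mem_powersetCard.1 hs).1
  exact Function.update_of_ne (by rintro rfl; exact hi (hs' hj)) 0 θ

lemma esymm_nonneg (θ : ℕ → ℝ) (h0 : ∀ j, 0 ≤ θ j) (k : ℕ) : 0 ≤ esymmSeq θ k :=
  tsum_nonneg fun s => Finset.prod_nonneg fun j _ => h0 j

lemma esymm_pos (θ : ℕ → ℝ) (h0 : ∀ j, 0 ≤ θ j) (hsum : Summable θ) (m : ℕ)
    (s : Finset ℕ) (hcard : s.card = m) (hne : ∀ j ∈ s, θ j ≠ 0) :
    0 < esymmSeq θ m := by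
  have hprod : 0 < ∏ j ∈ s, θ j :=
    Finset.prod_pos fun j hj => lt_of_le_of_ne (h0 j) (Ne.symm (hne j hj))
  have hle : ∏ j ∈ s, θ j ≤ esymmSeq θ m := by
    have := Summable.sum_le_tsum (f := fun x : {s : Finset ℕ // s.card = m} => ∏ j ∈ (x : Finset ℕ), θ j)
      ({⟨s, hcard⟩} : Finset {s : Finset ℕ // s.card = m})
      (fun x _ => Finset.prod_nonneg fun j _ => h0 j) (esymm_summable θ h0 hsum m)
    simpa [esymmSeq] using this
  linarith

lemma esymm_newton (θ : ℕ → ℝ) (h0 : ∀ j, 0 ≤ θ j) (hsum : Summable θ) (k : ℕ) :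
    esymmSeq θ k * esymmSeq θ (k+2) ≤ esymmSeq θ (k+1)^2 := by
  have h1 := (fe_tendsto θ h0 hsum k).mul (fe_tendsto θ h0 hsum (k+2))
  have h2 := (fe_tendsto θ h0 hsum (k+1)).pow 2
  exact le_of_tendsto_of_tendsto' h1 h2 (fun n => fe_newton θ h0 (Finset.range n) k)

lemma esymm_update (θ : ℕ → ℝ) (h0 : ∀ j, 0 ≤ θ j) (hsum : Summable θ) (i k : ℕ) :
    esymmSeq θ (k+1) = esymmSeq (Function.update θ i 0) (k+1)
      + θ i * esymmSeq (Function.update θ i 0) k := by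
  set θ' := Function.update θ i 0 with hθ'
  have h0' : ∀ j, 0 ≤ θ' j := by
    intro j
    rw [hθ', Function.update_apply]
    split <;> [exact le_refl 0; exact h0 j]
  have hsum' : Summable θ' := hsum.update i 0
  have key : ∀ n, i < n →
      fe θ (Finset.range n) (k+1) = fe θ' (Finset.range n) (k+1)
        + θ i * fe θ' (Finset.range n) k := by
    intro n hin
    have hiE : i ∉ (Finset.range n).erase i := Finset.notMem_erase i _
    have hrn : Finset.range n = insert i ((Finset.range n).erase i) :=
      (Finset.insert_erase (Finset.mem_range.2 hin)).symm
    set E := (Finset.range n).erase i with hE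
    have e1 : fe θ (Finset.range n) (k+1) = fe θ E (k+1) + θ i * fe θ E k := by
      rw [hrn]; exact fe_insert θ hiE k
    have e2 : fe θ' (Finset.range n) (k+1) = fe θ' E (k+1) := by
      rw [hrn, fe_insert θ' hiE k]
      have : θ' i = 0 := Function.update_self i 0 θ
      rw [this, zero_mul, add_zero]
    have e3 : fe θ' (Finset.range n) k = fe θ' E k := by
      match k with
      | 0 => rw [fe_zero, fe_zero]
      | (m+1) =>
        rw [hrn, fe_insert θ' hiE m]
        have : θ' i = 0 := Function.update_self i 0 θ
        rw [this, zero_mul, add_zero]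
    rw [e1, e2, e3, fe_congr_of_not_mem θ i hiE (k+1), fe_congr_of_not_mem θ i hiE k]
  have hT1 := fe_tendsto θ h0 hsum (k+1)
  have hT2 : Tendsto (fun n => fe θ' (Finset.range n) (k+1) + θ i * fe θ' (Finset.range n) k)
      atTop (nhds (esymmSeq θ' (k+1) + θ i * esymmSeq θ' k)) :=
    (fe_tendsto θ' h0' hsum' (k+1)).add ((fe_tendsto θ' h0' hsum' k).const_mul (θ i))
  have : Tendsto (fun n => fe θ (Finset.range n) (k+1)) atTop
      (nhds (esymmSeq θ' (k+1) + θ i * esymmSeq θ' k)) := by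
    refine hT2.congr' ?_
    filter_upwards [eventually_gt_atTop i] with n hn
    exact (key n hn).symm
  exact tendsto_nhds_unique hT1 this

theorem stmt7 (θ : ℕ → ℝ) (hθ0 : ∀ j, 0 ≤ θ j) (hsum : Summable θ)
    (hpos : 0 < ∑' j, θ j)
    (k : ℕ) (hk : ∃ s : Finset ℕ, s.card = k + 1 ∧ ∀ j ∈ s, θ j ≠ 0)
    (i : ℕ) :
    (if k = 0 then 0 else θ i * esymmSeq (Function.update θ i 0) (k - 1)) / esymmSeq θ k
      ≤ θ i * esymmSeq (Function.update θ i 0) k / esymmSeq θ (k + 1) := by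
  set θ' := Function.update θ i 0 with hθ'
  have h0' : ∀ j, 0 ≤ θ' j := by
    intro j
    rw [hθ', Function.update_apply]
    split <;> [exact le_refl 0; exact hθ0 j]
  have hsum' : Summable θ' := hsum.update i 0
  obtain ⟨s, hscard, hsne⟩ := hk
  match k with
  | 0 =>
    rw [if_pos rfl, zero_div]
    exact div_nonneg (mul_nonneg (hθ0 i) (esymm_nonneg θ' h0' 0)) (esymm_nonneg θ hθ0 (0+1))
  | (m+1) =>
    simp only [Nat.add_sub_cancel]
    rw [if_neg (Nat.succ_ne_zero m)]
    -- positivity of denominators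
    have hposk1 : 0 < esymmSeq θ (m+2) := esymm_pos θ hθ0 hsum (m+2) s hscard hsne
    have hposk : 0 < esymmSeq θ (m+1) := by
      obtain ⟨t, hts, htc⟩ := Finset.exists_subset_card_eq (show m+1 ≤ s.card by omega)
      exact esymm_pos θ hθ0 hsum (m+1) t htc (fun j hj => hsne j (hts hj))
    have id1 : esymmSeq θ (m+1) = esymmSeq θ' (m+1) + θ i * esymmSeq θ' m :=
      esymm_update θ hθ0 hsum i m
    have id2 : esymmSeq θ (m+2) = esymmSeq θ' (m+2) + θ i * esymmSeq θ' (m+1) :=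
      esymm_update θ hθ0 hsum i (m+1)
    have hN : esymmSeq θ' m * esymmSeq θ' (m+2) ≤ esymmSeq θ' (m+1)^2 :=
      esymm_newton θ' h0' hsum' m
    rw [div_le_div_iff₀ hposk hposk1]
    rw [id1, id2]
    have ht := hθ0 i
    have ha := esymm_nonneg θ' h0' m
    have hb := esymm_nonneg θ' h0' (m+1)
    have hc := esymm_nonneg θ' h0' (m+2)
    nlinarith [mul_le_mul_of_nonneg_left hN ht, mul_nonneg (mul_nonneg ht ht)
      (mul_nonneg ha hb)]
end

section
/- For compositions c and c' of positive integers, let ⪯ denote the partial order generated by the covering relation: c ≺ c' iff c' is obtained from c by incrementing one part by 1 or by appending a new part equal to 1 at the right end. Then for nonempty compositions c and c', c ⪯ c' if and only if proj_1(c) ≤ proj_1(c') and proj_{>1}(c) ⪯ proj_{>1}(c'). -/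
/-- The covering relation on compositions: `c'` covers `c` if `c'` is obtained from
`c` by incrementing one part by `1`, or by appending a new part `1` on the right. -/
def CompCover (c c' : List ℕ) : Prop :=
  (∃ i : Fin c.length, c' = c.set i (c.get i + 1)) ∨ c' = c ++ [1]

lemma CompCover.ne_nil {a b : List ℕ} (h : CompCover a b) (ha : a ≠ []) : b ≠ [] := by
  rcases h with ⟨i, rfl⟩ | rfl
  · simpa using ha
  · simp

lemma rtg_ne_nil {a b : List ℕ} (h : Relation.ReflTransGen CompCover a b) (ha : a ≠ []) :
    b ≠ [] := by
  induction h with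
  | refl => exact ha
  | tail _ h2 ih => exact h2.ne_nil ih

lemma CompCover.cons (a : ℕ) {t t' : List ℕ} (h : CompCover t t') :
    CompCover (a :: t) (a :: t') := by
  rcases h with ⟨i, rfl⟩ | rfl
  · exact Or.inl ⟨i.succ, rfl⟩
  · exact Or.inr rfl

lemma rtg_cons (a : ℕ) {t t' : List ℕ} (h : Relation.ReflTransGen CompCover t t') :
    Relation.ReflTransGen CompCover (a :: t) (a :: t') := by
  induction h with
  | refl => exact .refl
  | tail _ h2 ih => exact ih.tail (h2.cons a)

lemma rtg_head {a b : ℕ} (hab : a ≤ b) (t : List ℕ) :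
    Relation.ReflTransGen CompCover (a :: t) (b :: t) := by
  induction b with
  | zero => obtain rfl := Nat.le_zero.mp hab; exact .refl
  | succ n ih =>
    rcases Nat.lt_or_ge a (n+1) with h | h
    · exact (ih (Nat.lt_succ_iff.mp h)).tail
        (Or.inl ⟨⟨0, by simp⟩, by simp⟩)
    · have : a = n + 1 := le_antisymm hab h
      subst this; exact .refl

theorem stmt10 (c c' : List ℕ)
    (hc : ∀ m ∈ c, 0 < m) (hc' : ∀ m ∈ c', 0 < m)
    (hne : c ≠ []) (hne' : c' ≠ []) :
    Relation.ReflTransGen CompCover c c' ↔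
      c.headI ≤ c'.headI ∧ Relation.ReflTransGen CompCover c.tail c'.tail := by
  constructor
  · intro h
    clear hc hc' hne'
    induction h with
    | refl => exact ⟨le_rfl, .refl⟩
    | tail h1 h2 ih =>
      rename_i b _
      have hb : b ≠ [] := rtg_ne_nil h1 hne
      obtain ⟨x, u, rfl⟩ := List.exists_cons_of_ne_nil hb
      obtain ⟨ihh, iht⟩ := ih
      rcases h2 with ⟨⟨iv, hi⟩, rfl⟩ | rfl
      · cases iv with
        | zero =>
          simp only [List.set_cons_zero, List.get, List.headI, List.tail]
          exact ⟨ihh.trans (Nat.le_succ x), iht⟩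
        | succ j =>
          simp only [List.set_cons_succ, List.get, List.headI, List.tail] at *
          exact ⟨ihh, iht.tail (Or.inl ⟨⟨j, by simpa using hi⟩, rfl⟩)⟩
      · simp only [List.cons_append, List.headI, List.tail] at *
        exact ⟨ihh, iht.tail (Or.inr rfl)⟩
  · rintro ⟨hh, ht⟩
    obtain ⟨x, u, rfl⟩ := List.exists_cons_of_ne_nil hne
    obtain ⟨y, v, rfl⟩ := List.exists_cons_of_ne_nil hne'
    simp only [List.headI, List.tail] at hh ht
    exact (rtg_cons x ht).trans (rtg_head hh v)
end

section
/- Let w = (w_0,w_1,...) be a non-negative log-concave sequence with w_0·w_1 > 0. Then the array f_{n,k}^w (the total w-weight of ordered forests of k plane trees with n total vertices) is totally positive of order two: for all 1 ≤ n ≤ n' and 1 ≤ k ≤ k', f_{n,k}^w·f_{n',k'}^w ≥ f_{n,k'}^w·f_{n',k}^w. -/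
/-- Rooted plane trees: a node together with its ordered list of subtrees. -/
inductive PlaneTree where
  | node : List PlaneTree → PlaneTree

/-- Number of vertices of a plane tree. -/
def PlaneTree.size : PlaneTree → ℕ
  | .node l => 1 + (l.attach.map (fun t => PlaneTree.size t.1)).sum
decreasing_by
  have := List.sizeOf_lt_of_mem t.2
  simp only [PlaneTree.node.sizeOf_spec]
  omega

/-- The weight `ω(T) = ∏_{u ∈ T} w_{k_u(T)}` of a plane tree. -/
noncomputable def omegaW (w : ℕ → ℝ) : PlaneTree → ℝ
  | .node l => w l.length * (l.attach.map (fun t => omegaW w t.1)).prod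
decreasing_by
  have := List.sizeOf_lt_of_mem t.2
  simp only [PlaneTree.node.sizeOf_spec]
  omega

/-- `b_n^w`: total `w`-weight of plane trees with `n` vertices. -/
noncomputable def bW (w : ℕ → ℝ) (n : ℕ) : ℝ :=
  ∑' T : {T : PlaneTree // T.size = n}, omegaW w (T : PlaneTree)

/-- `f_{n,k}^w`: total `w`-weight of ordered forests of `k` plane trees
with `n` vertices in total. -/
noncomputable def fW (w : ℕ → ℝ) (n k : ℕ) : ℝ :=
  ∑' F : {l : List PlaneTree // l.length = k ∧ (l.map PlaneTree.size).sum = n},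
    ((F : List PlaneTree).map (omegaW w)).prod

theorem size_node (l : List PlaneTree) :
    (PlaneTree.node l).size = 1 + (l.map PlaneTree.size).sum := by
  rw [PlaneTree.size]
  congr 1
  rw [List.attach_map_val (l := l) (f := PlaneTree.size)]

theorem omega_node (w : ℕ → ℝ) (l : List PlaneTree) :
    omegaW w (PlaneTree.node l) = w l.length * (l.map (omegaW w)).prod := by
  rw [omegaW]
  congr 1
  rw [List.attach_map_val (l := l) (f := omegaW w)]

theorem size_pos : ∀ T : PlaneTree, 1 ≤ T.size
  | .node l => by rw [size_node]; omega

theorem omega_nonneg (w : ℕ → ℝ) (hnn : ∀ i, 0 ≤ w i) : ∀ T : PlaneTree, 0 ≤ omegaW w T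
  | .node l => by
    rw [omegaW]
    refine mul_nonneg (hnn _) (List.prod_nonneg ?_)
    intro x hx
    simp only [List.mem_map, List.mem_attach, true_and] at hx
    obtain ⟨t, rfl⟩ := hx
    exact omega_nonneg w hnn t.1
decreasing_by
  have := List.sizeOf_lt_of_mem t.2
  simp only [PlaneTree.node.sizeOf_spec]
  omega

theorem finite_lists {α : Type*} (S : Set α) (hS : S.Finite) (n : ℕ) :
    {l : List α | l.length ≤ n ∧ ∀ t ∈ l, t ∈ S}.Finite := by
  haveI := hS.to_subtype
  have h := List.finite_length_le ↥S n
  refine (h.image (List.map Subtype.val)).subset ?_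
  rintro l ⟨hlen, hmem⟩
  refine ⟨l.pmap (fun t h => (⟨t, h⟩ : ↥S)) hmem, ?_, ?_⟩
  · simpa using hlen
  · simp [List.map_pmap]

theorem finite_trees : ∀ n : ℕ, {T : PlaneTree | T.size ≤ n}.Finite := by
  intro n
  induction n with
  | zero =>
    convert Set.finite_empty
    ext T
    simpa using by have := size_pos T; omega
  | succ n ih =>
    have h2 := (finite_lists _ ih n).image PlaneTree.node
    refine h2.subset ?_
    rintro ⟨l⟩ hT
    simp only [Set.mem_setOf_eq, size_node] at hT
    refine ⟨l, ⟨?_, ?_⟩, rfl⟩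
    · have h1 : ∀ i ∈ l.map PlaneTree.size, 1 ≤ i := by
        intro i hi
        simp only [List.mem_map] at hi
        obtain ⟨t, _, rfl⟩ := hi
        exact size_pos t
      have : l.length ≤ (l.map PlaneTree.size).sum := by
        calc l.length = (l.map PlaneTree.size).length := (List.length_map _).symm
          _ ≤ (l.map PlaneTree.size).sum := List.length_le_sum_of_one_le _ h1
      omega
    · intro t ht
      have : t.size ≤ (l.map PlaneTree.size).sum :=
        List.single_le_sum (by
          intro x hx
          simp only [List.mem_map] at hx
          obtain ⟨u, _, rfl⟩ := hx
          exact Nat.zero_le _) _ (List.mem_map_of_mem ht)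
      simp only [Set.mem_setOf_eq]
      omega

theorem finite_forests (n k : ℕ) :
    {l : List PlaneTree | l.length = k ∧ (l.map PlaneTree.size).sum = n}.Finite := by
  refine (finite_lists _ (finite_trees n) k).subset ?_
  rintro l ⟨hlen, hsum⟩
  refine ⟨hlen.le, fun t ht => ?_⟩
  have : t.size ≤ (l.map PlaneTree.size).sum :=
    List.single_le_sum (fun x _ => Nat.zero_le x) _ (List.mem_map_of_mem ht)
  simp only [Set.mem_setOf_eq]
  omega


/-- the forest finset -/
noncomputable def Afin (n k : ℕ) : Finset (List PlaneTree) := (finite_forests n k).toFinset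

theorem mem_Afin {n k : ℕ} {l : List PlaneTree} :
    l ∈ Afin n k ↔ l.length = k ∧ (l.map PlaneTree.size).sum = n := by
  simp [Afin, Set.Finite.mem_toFinset, Set.mem_setOf_eq]

theorem fW_eq_sum (w : ℕ → ℝ) (n k : ℕ) :
    fW w n k = ∑ l ∈ Afin n k, (l.map (omegaW w)).prod := by
  haveI : Fintype {l : List PlaneTree // l.length = k ∧ (l.map PlaneTree.size).sum = n} :=
    Set.Finite.fintype (finite_forests n k)
  rw [fW, tsum_fintype]
  exact (Finset.sum_subtype (Afin n k) (fun l => mem_Afin)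
    (fun l => (l.map (omegaW w)).prod)).symm

theorem W_nonneg (w : ℕ → ℝ) (hnn : ∀ i, 0 ≤ w i) (l : List PlaneTree) :
    0 ≤ (l.map (omegaW w)).prod := by
  refine List.prod_nonneg fun x hx => ?_
  simp only [List.mem_map] at hx
  obtain ⟨t, _, rfl⟩ := hx
  exact omega_nonneg w hnn t

theorem fW_nonneg (w : ℕ → ℝ) (hnn : ∀ i, 0 ≤ w i) (n k : ℕ) : 0 ≤ fW w n k := by
  rw [fW_eq_sum]
  exact Finset.sum_nonneg fun l _ => W_nonneg w hnn l

theorem fW_eq_zero_of_lt (w : ℕ → ℝ) {n k : ℕ} (h : n < k) : fW w n k = 0 := by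
  rw [fW_eq_sum]
  refine Finset.sum_eq_zero fun l hl => ?_
  exfalso
  obtain ⟨hlen, hsum⟩ := mem_Afin.1 hl
  have h1 : ∀ i ∈ l.map PlaneTree.size, 1 ≤ i := by
    intro i hi
    simp only [List.mem_map] at hi
    obtain ⟨t, _, rfl⟩ := hi
    exact size_pos t
  have : l.length ≤ (l.map PlaneTree.size).sum := by
    calc l.length = (l.map PlaneTree.size).length := (List.length_map _).symm
      _ ≤ (l.map PlaneTree.size).sum := List.length_le_sum_of_one_le _ h1
  omega

theorem fW_zero_zero (w : ℕ → ℝ) : fW w 0 0 = 1 := by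
  rw [fW_eq_sum]
  have : Afin 0 0 = {([] : List PlaneTree)} := by
    ext l
    simp only [mem_Afin, Finset.mem_singleton]
    constructor
    · rintro ⟨h, -⟩; exact List.length_eq_zero_iff.1 h
    · rintro rfl; simp
  simp [this]

theorem fW_pos_zero (w : ℕ → ℝ) {n : ℕ} (hn : 1 ≤ n) : fW w n 0 = 0 := by
  rw [fW_eq_sum]
  refine Finset.sum_eq_zero fun l hl => ?_
  exfalso
  obtain ⟨hlen, hsum⟩ := mem_Afin.1 hl
  obtain rfl := List.length_eq_zero_iff.1 hlen
  simp at hsum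
  omega

theorem len_le_sumsize (l : List PlaneTree) : l.length ≤ (l.map PlaneTree.size).sum := by
  have h1 : ∀ i ∈ l.map PlaneTree.size, 1 ≤ i := by
    intro i hi
    simp only [List.mem_map] at hi
    obtain ⟨t, _, rfl⟩ := hi
    exact size_pos t
  calc l.length = (l.map PlaneTree.size).length := (List.length_map _).symm
    _ ≤ (l.map PlaneTree.size).sum := List.length_le_sum_of_one_le _ h1

def splitF : List PlaneTree → Σ _ : ℕ, List PlaneTree
  | PlaneTree.node c :: r => ⟨c.length, c ++ r⟩
  | [] => ⟨0, []⟩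

def joinF (x : Σ _ : ℕ, List PlaneTree) : List PlaneTree :=
  PlaneTree.node (x.2.take x.1) :: x.2.drop x.1

theorem fW_rec (w : ℕ → ℝ) {n k : ℕ} (hn : 1 ≤ n) (hk : 1 ≤ k) :
    fW w n k = ∑ j ∈ Finset.range n, w j * fW w (n-1) (k-1+j) := by
  have hrhs : ∑ j ∈ Finset.range n, w j * fW w (n-1) (k-1+j)
      = ∑ x ∈ (Finset.range n).sigma (fun j => Afin (n-1) (k-1+j)),
          w x.1 * ((x.2.map (omegaW w)).prod) := by
    rw [Finset.sum_sigma]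
    refine Finset.sum_congr rfl fun j _ => ?_
    rw [fW_eq_sum, Finset.mul_sum]
  rw [hrhs, fW_eq_sum]
  refine Finset.sum_nbij' splitF joinF ?_ ?_ ?_ ?_ ?_
  · rintro (_ | ⟨⟨c⟩, r⟩) hl
    · exfalso; obtain ⟨h1, -⟩ := mem_Afin.1 hl; simp at h1; omega
    · obtain ⟨h1, h2⟩ := mem_Afin.1 hl
      simp only [List.length_cons] at h1
      simp only [List.map_cons, List.sum_cons, size_node] at h2
      have hc := len_le_sumsize c
      show (⟨c.length, c ++ r⟩ : Σ _ : ℕ, List PlaneTree) ∈ _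
      rw [Finset.mem_sigma]
      dsimp only
      constructor
      · rw [Finset.mem_range]; omega
      · rw [mem_Afin]
        constructor
        · rw [List.length_append]; omega
        · rw [List.map_append, List.sum_append]; omega
  · rintro ⟨j, m⟩ hx
    rw [Finset.mem_sigma, Finset.mem_range, mem_Afin] at hx
    dsimp only at hx
    obtain ⟨hj, hlen, hsum⟩ := hx
    rw [mem_Afin]
    unfold joinF
    constructor
    · simp only [List.length_cons, List.length_drop]
      omega
    · simp only [List.map_cons, List.sum_cons, size_node]
      have : (m.take j).map PlaneTree.size ++ (m.drop j).map PlaneTree.size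
          = m.map PlaneTree.size := by
        rw [← List.map_append, List.take_append_drop]
      have h3 : ((m.take j).map PlaneTree.size).sum + ((m.drop j).map PlaneTree.size).sum
          = (m.map PlaneTree.size).sum := by rw [← List.sum_append, this]
      omega
  · rintro (_ | ⟨⟨c⟩, r⟩) hl
    · exfalso; obtain ⟨h1, -⟩ := mem_Afin.1 hl; simp at h1; omega
    · show joinF ⟨c.length, c ++ r⟩ = _
      unfold joinF
      simp only [List.take_left, List.drop_left]
  · rintro ⟨j, m⟩ hx
    rw [Finset.mem_sigma, Finset.mem_range, mem_Afin] at hx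
    dsimp only at hx
    obtain ⟨hj, hlen, hsum⟩ := hx
    show splitF (PlaneTree.node (m.take j) :: m.drop j) = _
    unfold splitF
    have h1 : (m.take j).length = j := by
      rw [List.length_take]; omega
    refine Sigma.ext h1 (heq_of_eq ?_)
    simp only [List.take_append_drop]
  · rintro (_ | ⟨⟨c⟩, r⟩) hl
    · exfalso; obtain ⟨h1, -⟩ := mem_Afin.1 hl; simp at h1; omega
    · show _ = w c.length * (((c ++ r).map (omegaW w)).prod)
      rw [List.map_cons, List.prod_cons, omega_node, List.map_append, List.prod_append]
      ring

noncomputable def cW (w : ℕ → ℝ) (k p : ℕ) : ℝ := if k - 1 ≤ p then w (p - (k-1)) else 0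

theorem cW_nonneg (w : ℕ → ℝ) (hnn : ∀ i, 0 ≤ w i) (k p : ℕ) : 0 ≤ cW w k p := by
  unfold cW; split
  · exact hnn _
  · exact le_refl 0

theorem fW_rec' (w : ℕ → ℝ) {n k N : ℕ} (hk : 1 ≤ k) (hN : n + 1 ≤ N) :
    fW w (n+1) k = ∑ p ∈ Finset.range N, cW w k p * fW w n p := by
  have hzero : ∀ p, n + 1 ≤ p → cW w k p * fW w n p = 0 := by
    intro p hp
    rw [fW_eq_zero_of_lt w (by omega), mul_zero]
  have key : ∀ M, n + 1 ≤ M → ∑ p ∈ Finset.range M, cW w k p * fW w n p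
      = ∑ p ∈ Finset.range ((k-1) + (n+1)), cW w k p * fW w n p := by
    intro M hM
    rcases le_total M ((k-1) + (n+1)) with hle | hle
    · exact (Finset.sum_subset (Finset.range_subset_range.2 hle) (fun p hp hnp => by
        rw [Finset.mem_range] at hp
        rw [Finset.mem_range, not_lt] at hnp
        exact hzero p (by omega)))
    · exact (Finset.sum_subset (Finset.range_subset_range.2 hle) (fun p hp hnp => by
        rw [Finset.mem_range] at hp
        rw [Finset.mem_range, not_lt] at hnp
        exact hzero p (by omega))).symm
  rw [key N hN, Finset.sum_range_add]
  have h1 : ∑ p ∈ Finset.range (k-1), cW w k p * fW w n p = 0 := by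
    refine Finset.sum_eq_zero fun p hp => ?_
    rw [Finset.mem_range] at hp
    rw [cW, if_neg (by omega), zero_mul]
  have h2 : ∀ j, cW w k ((k-1) + j) = w j := by
    intro j
    rw [cW, if_pos (by omega)]
    congr 1
    omega
  rw [h1, zero_add]
  rw [fW_rec w (by omega) hk]
  refine Finset.sum_congr rfl fun j _ => ?_
  rw [h2 j]
  norm_num

section wlem
variable {w : ℕ → ℝ} (hnn : ∀ i, 0 ≤ w i)
  (hlc : ∀ i : ℕ, 1 ≤ i → w (i - 1) * w (i + 1) ≤ (w i) ^ 2)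
  (hniz : ∀ i j k : ℕ, i ≤ k → k ≤ j → w i ≠ 0 → w j ≠ 0 → w k ≠ 0)

include hnn hlc hniz

theorem w_step : ∀ a b : ℕ, 1 ≤ a → a ≤ b → w (a-1) * w (b+1) ≤ w a * w b := by
  intro a b ha hab
  induction b, hab using Nat.le_induction with
  | base => have := hlc a ha; nlinarith [this]
  | succ b hb ih =>
    by_cases h1 : w (a-1) = 0
    · rw [h1, zero_mul]; exact mul_nonneg (hnn _) (hnn _)
    by_cases h2 : w (b+1+1) = 0
    · rw [h2, mul_zero]; exact mul_nonneg (hnn _) (hnn _)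
    have hwb : w b ≠ 0 := hniz (a-1) (b+2) b (by omega) (by omega) h1 h2
    have hwb1 : w (b+1) ≠ 0 := hniz (a-1) (b+2) (b+1) (by omega) (by omega) h1 h2
    have pb : 0 < w b := lt_of_le_of_ne (hnn b) (Ne.symm hwb)
    have pb1 : 0 < w (b+1) := lt_of_le_of_ne (hnn (b+1)) (Ne.symm hwb1)
    have h3 := ih
    have h4 := hlc (b+1) (by omega)
    simp only [Nat.add_sub_cancel] at h4
    nlinarith [mul_le_mul_of_nonneg_right h3 (hnn (b+2)),
      mul_le_mul_of_nonneg_left h4 (hnn a), hnn (a-1), hnn a, hnn (b+2)]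

theorem w_shift : ∀ s x y : ℕ, s ≤ x → x ≤ y → w (x-s) * w (y+s) ≤ w x * w y := by
  intro s
  induction s with
  | zero => intro x y _ _; simp
  | succ s ih =>
    intro x y hsx hxy
    have e1 : x - (s+1) = (x - s) - 1 := by omega
    have e2 : y + (s+1) = (y + s) + 1 := by omega
    calc w (x-(s+1)) * w (y+(s+1)) = w ((x-s)-1) * w ((y+s)+1) := by rw [e1, e2]
      _ ≤ w (x-s) * w (y+s) := w_step hnn hlc hniz (x-s) (y+s) (by omega) (by omega)
      _ ≤ w x * w y := ih x y (by omega) hxy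

theorem cTP {k k' p q : ℕ} (hk : 1 ≤ k) (hkk' : k ≤ k') (hpq : p ≤ q) :
    cW w k' p * cW w k q ≤ cW w k p * cW w k' q := by
  by_cases h1 : k' - 1 ≤ p
  · have h2 : k - 1 ≤ p := by omega
    have h3 : k - 1 ≤ q := by omega
    have h4 : k' - 1 ≤ q := by omega
    rw [cW, cW, cW, cW, if_pos h1, if_pos h2, if_pos h3, if_pos h4]
    rcases le_total (p - (k-1)) (q - (k'-1)) with hle | hle
    · have e1 : (p - (k-1)) - (k'-k) = p - (k'-1) := by omega
      have e2 : (q - (k'-1)) + (k'-k) = q - (k-1) := by omega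
      have := w_shift hnn hlc hniz (k'-k) (p-(k-1)) (q-(k'-1)) (by omega) hle
      rw [e1, e2] at this
      linarith
    · have e1 : (q - (k'-1)) - (q-p) = p - (k'-1) := by omega
      have e2 : (p - (k-1)) + (q-p) = q - (k-1) := by omega
      have := w_shift hnn hlc hniz (q-p) (q-(k'-1)) (p-(k-1)) (by omega) hle
      rw [e1, e2] at this
      nlinarith [this]
  · rw [cW, if_neg h1, zero_mul]
    exact mul_nonneg (cW_nonneg w hnn _ _) (cW_nonneg w hnn _ _)

theorem fW_TP : ∀ n n' k k' : ℕ, n ≤ n' → k ≤ k' →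
    fW w n k' * fW w n' k ≤ fW w n k * fW w n' k' := by
  intro n
  induction n with
  | zero =>
    intro n' k k' hnn' hkk'
    rcases Nat.eq_zero_or_pos k' with rfl | hk'
    · obtain rfl : k = 0 := by omega
      exact le_refl _
    · rw [fW_eq_zero_of_lt w (show 0 < k' by omega), zero_mul]
      exact mul_nonneg (fW_nonneg w hnn _ _) (fW_nonneg w hnn _ _)
  | succ n ih =>
    intro n' k k' hnn' hkk'
    obtain ⟨m, rfl⟩ : ∃ m, n' = m + 1 := ⟨n' - 1, by omega⟩
    have hmn : n ≤ m := by omega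
    rcases Nat.eq_zero_or_pos k with rfl | hk
    · rcases Nat.eq_zero_or_pos k' with rfl | hk'
      · exact le_refl _
      · rw [fW_pos_zero w (show 1 ≤ m+1 by omega), mul_zero,
          fW_pos_zero w (show 1 ≤ n+1 by omega), zero_mul]
    · have hk' : 1 ≤ k' := le_trans hk hkk'
      set r := Finset.range (m+1) with hr
      set g : ℕ → ℝ := fun p => fW w n p with hg
      set h : ℕ → ℝ := fun p => fW w m p with hh
      have e1 : fW w (n+1) k = ∑ p ∈ r, cW w k p * g p := fW_rec' w hk (by omega)
      have e2 : fW w (n+1) k' = ∑ p ∈ r, cW w k' p * g p := fW_rec' w hk' (by omega)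
      have e3 : fW w (m+1) k = ∑ p ∈ r, cW w k p * h p := fW_rec' w hk (by omega)
      have e4 : fW w (m+1) k' = ∑ p ∈ r, cW w k' p * h p := fW_rec' w hk' (by omega)
      set A : ℕ → ℕ → ℝ := fun p q =>
        (cW w k p * g p) * (cW w k' q * h q) - (cW w k' p * g p) * (cW w k q * h q) with hA
      have key : ∀ p q : ℕ, 0 ≤ A p q + A q p := by
        intro p q
        have expand : A p q + A q p
            = (cW w k p * cW w k' q - cW w k' p * cW w k q) * (g p * h q - g q * h p) := by
          rw [hA]; ring
        rw [expand]
        rcases le_total p q with hpq | hpq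
        · refine mul_nonneg (sub_nonneg.2 (cTP hnn hlc hniz hk hkk' hpq)) (sub_nonneg.2 ?_)
          exact ih m p q hmn hpq
        · have hc1 : cW w k p * cW w k' q - cW w k' p * cW w k q ≤ 0 := by
            have := cTP hnn hlc hniz hk hkk' hpq
            linarith
          have hc2 : g p * h q - g q * h p ≤ 0 := by
            have := ih m q p hmn hpq
            linarith
          rw [← neg_mul_neg]
          exact mul_nonneg (by linarith) (by linarith)
      have hS : 0 ≤ ∑ p ∈ r, ∑ q ∈ r, A p q := by
        have hcomm : (∑ p ∈ r, ∑ q ∈ r, A p q) = ∑ p ∈ r, ∑ q ∈ r, A q p :=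
          Finset.sum_comm
        have hdouble : (∑ p ∈ r, ∑ q ∈ r, A p q) + (∑ p ∈ r, ∑ q ∈ r, A p q)
            = ∑ p ∈ r, ∑ q ∈ r, (A p q + A q p) := by
          nth_rewrite 2 [hcomm]
          rw [← Finset.sum_add_distrib]
          refine Finset.sum_congr rfl fun p _ => ?_
          rw [← Finset.sum_add_distrib]
        have : 0 ≤ ∑ p ∈ r, ∑ q ∈ r, (A p q + A q p) :=
          Finset.sum_nonneg fun p _ => Finset.sum_nonneg fun q _ => key p q
        linarith
      have eq1 : ∑ p ∈ r, ∑ q ∈ r, A p q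
          = (∑ p ∈ r, cW w k p * g p) * (∑ q ∈ r, cW w k' q * h q)
            - (∑ p ∈ r, cW w k' p * g p) * (∑ q ∈ r, cW w k q * h q) := by
        rw [Finset.sum_mul_sum, Finset.sum_mul_sum, ← Finset.sum_sub_distrib]
        refine Finset.sum_congr rfl fun p _ => ?_
        rw [← Finset.sum_sub_distrib]
      rw [e1, e2, e3, e4]
      linarith [hS, eq1]

end wlem


theorem stmt12 (w : ℕ → ℝ) (hnn : ∀ i, 0 ≤ w i) (hw : 0 < w 0 * w 1)
    (hlc : ∀ i : ℕ, 1 ≤ i → w (i - 1) * w (i + 1) ≤ (w i) ^ 2)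
    (hniz : ∀ i j k : ℕ, i ≤ k → k ≤ j → w i ≠ 0 → w j ≠ 0 → w k ≠ 0)
    (n n' k k' : ℕ) (hn : 1 ≤ n) (hnn' : n ≤ n') (hk : 1 ≤ k) (hkk' : k ≤ k') :
    fW w n k' * fW w n' k ≤ fW w n k * fW w n' k' := by
  exact fW_TP hnn hlc hniz n n' k k' hnn' hkk'
end
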